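/- arXiv:1311.7357 — 8 statements merged into one kernel-verified Lean document; each statement's English description precedes it below -/
import Mathlib

section
/- Fix γ with 1 < γ ≤ 15/14. Every online list-update algorithm with advice on a list of two items that serves every request sequence σ with cost at most γ·OPT(σ) (full cost model) must, for every length n divisible by 5, read at least (1 + (7γ−7)·log₂(7γ−7) + (8−7γ)·log₂(8−7γ))·n/5 bits of advice on some input of length n. -/
/-!
Requests come in blocks `x y b b b̄`, each encoding one bit `b` (`x` for `0`, `y` for `1`).
Offline, every block costs `7` and ends with the list back at `x y`: move `y` to the front at
its first request iff `b = 1`, and `x` back at the end. Online, a block costs at least `7`, plus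
`1` whenever the list right after its prefix `x y` does not have the item `b` in front. That
configuration is therefore a guess of `b` made from the advice and the earlier bits only, and
`γ`-competitiveness allows at most `p·m` wrong guesses among `m` blocks, `p = 7γ - 7`. A bit
string is recovered from the advice read and the set of wrong positions, so
`2^m ≤ 2^K · #{S : |S| ≤ p m} ≤ 2^K · 2^(H(p) m)`.
-/

namespace ListUpdate

variable {α : Type} [DecidableEq α]

/-- Swap the adjacent items at (0-based) positions `i` and `i+1`. -/
def adjSwap (L : List α) (i : ℕ) : List α :=
  L.take i ++ (match L.drop i with
    | a :: b :: t => b :: a :: t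
    | t => t)

/-- An offline action for one request: a sequence of paid exchanges performed
before the access (each given by the position of the swapped pair), and the
target position for the free exchange performed after the access. -/
structure Action (α : Type) where
  paid : List ℕ
  target : ℕ

def doPaid (L : List α) (ps : List ℕ) : List α := ps.foldl adjSwap L

/-- Move item `r` (for free) to position `min j (current position)`,
i.e. to any position not farther from the front. -/
def freeMove (L : List α) (r : α) (j : ℕ) : List α :=
  (L.erase r).insertIdx (min j (L.idxOf r)) r

/-- Cost of one offline step: one unit per paid exchange plus the access cost;
`c = 1` gives the full cost model, `c = 0` the partial cost model. -/
def stepCost (c : ℕ) (L : List α) (r : α) (a : Action α) : ℕ :=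
  a.paid.length + ((doPaid L a.paid).idxOf r + c)

def stepList (L : List α) (r : α) (a : Action α) : List α :=
  freeMove (doPaid L a.paid) r a.target

/-- Total cost of serving the request sequence with the given actions. -/
def serveCost (c : ℕ) : List α → List α → List (Action α) → ℕ
  | _, [], _ => 0
  | _, _ :: _, [] => 0
  | L, r :: σ, a :: as => stepCost c L r a + serveCost c (stepList L r a) σ as

/-- The list configuration after serving the requests with the given actions. -/
def serveList : List α → List α → List (Action α) → List α
  | L, [], _ => L
  | L, _ :: _, [] => L
  | L, r :: σ, a :: as => serveList (stepList L r a) σ as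

/-- `optCost c L σ` : the optimal offline cost of serving `σ` starting from list `L`. -/
noncomputable def optCost (c : ℕ) (L : List α) (σ : List α) : ℕ :=
  sInf { n | ∃ as : List (Action α), as.length = σ.length ∧ serveCost c L σ as = n }

/-- Cost of an MTF2 (move-to-front-every-other-access) algorithm: it keeps one bit
per item; on each request the requested item's bit is flipped and the item is moved
to the front exactly when the bit becomes `false` (i.e. 0). -/
def mtf2Cost (c : ℕ) : (α → Bool) → List α → List α → ℕ
  | _, _, [] => 0
  | bits, L, r :: σ =>
    (L.idxOf r + c) +
      mtf2Cost c (Function.update bits r (!bits r))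
        (if !bits r then L else r :: L.erase r) σ

/-- Final list of an MTF2 algorithm. -/
def mtf2List : (α → Bool) → List α → List α → List α
  | _, L, [] => L
  | bits, L, r :: σ =>
      mtf2List (Function.update bits r (!bits r))
        (if !bits r then L else r :: L.erase r) σ

/-- MTFO moves the requested item to the front on every odd request to it:
this is MTF2 with all bits initially 1. -/
def mtfoCost (c : ℕ) (L σ : List α) : ℕ := mtf2Cost c (fun _ => true) L σ

/-- MTFE moves the requested item to the front on every even request to it:
this is MTF2 with all bits initially 0. -/
def mtfeCost (c : ℕ) (L σ : List α) : ℕ := mtf2Cost c (fun _ => false) L σ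

/-- One step of TS (Timestamp). `h` is the list of previous requests, most recent
first. The requested item `x` is inserted in front of the first item of the list
that precedes `x` and was requested at most once since the last request to `x`;
if there is no such item, or this is the first request to `x`, nothing moves. -/
def tsStep (h : List α) (L : List α) (x : α) : List α :=
  if x ∈ h then
    let cnt : α → ℕ := fun z => (h.takeWhile (fun w => decide (w ≠ x))).count z
    let pre := L.takeWhile (fun w => decide (w ≠ x))
    let keep := pre.takeWhile (fun z => decide (2 ≤ cnt z))
    keep ++ x :: (pre.drop keep.length ++ (L.dropWhile (fun w => decide (w ≠ x))).tail)
  else L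

/-- Cost of TS; `h` is the history of previous requests, most recent first
(initially `[]`). -/
def tsCost (c : ℕ) : List α → List α → List α → ℕ
  | _, _, [] => 0
  | h, L, r :: σ => (L.idxOf r + c) + tsCost c (r :: h) (tsStep h L r) σ

/-- An online algorithm with advice: its action may depend on the advice tape and
on the sequence of requests seen so far (ending with the current request). -/
def OnlineAdviceAlg (α : Type) := (ℕ → Bool) → List α → Action α

/-- Total cost of running the online algorithm `A` with advice tape `φ`:
`past` is the reversed-free list of requests served so far (oldest first). -/
def runAdvCost (c : ℕ) (A : OnlineAdviceAlg α) (φ : ℕ → Bool) :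
    List α → List α → List α → ℕ
  | _, _, [] => 0
  | past, L, r :: σ =>
      stepCost c L r (A φ (past ++ [r])) +
        runAdvCost c A φ (past ++ [r]) (stepList L r (A φ (past ++ [r]))) σ

/-- `A`, run on `σ` with tape `φ`, reads at most the first `k` bits of advice:
its behaviour on every step of `σ` is unchanged if the tape is modified
beyond position `k`. -/
def UsesAdvice (A : OnlineAdviceAlg α) (φ : ℕ → Bool) (σ : List α) (k : ℕ) : Prop :=
  ∀ ψ : ℕ → Bool, (∀ i < k, ψ i = φ i) →
    ∀ t, 0 < t → t ≤ σ.length → A ψ (σ.take t) = A φ (σ.take t)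

end ListUpdate

open ListUpdate

open Finset

theorem two_pow_le_of_guessing {m K d : ℕ} (advice : (Fin m → Bool) → Fin K → Bool)
    (guess : (Fin K → Bool) → List Bool → Bool)
    (hwrong : ∀ v, #{j : Fin m | guess (advice v) ((List.ofFn v).take j) ≠ v j} ≤ d) :
    2 ^ m ≤ 2 ^ K * #{S : Finset (Fin m) | #S ≤ d} := by
  set encode : (Fin m → Bool) → (Fin K → Bool) × Finset (Fin m) := fun v ↦
    (advice v, ({j | guess (advice v) ((List.ofFn v).take j) ≠ v j} : Finset (Fin m)))
  -- Bit `i` is the guess made from the first `i` bits, flipped iff `i` is a wrong position.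
  have hinj : Function.Injective encode := by
    intro v v' hvv
    obtain ⟨hadv, hwrongs⟩ := Prod.mk.inj hvv
    funext ⟨i, hi⟩
    induction i using Nat.strong_induction_on with
    | _ i ih =>
      have hprefix : (List.ofFn v).take i = (List.ofFn v').take i :=
        List.ext_getElem (by simp) fun k hk _ ↦ by
          simp only [List.length_take, List.length_ofFn] at hk
          simpa using ih k (by omega) (by omega)
      have hmem := congrArg (⟨i, hi⟩ ∈ ·) hwrongs
      simp only [hadv, hprefix, mem_filter, mem_univ, true_and, eq_iff_iff] at hmem
      revert hmem
      cases v ⟨i, hi⟩ <;> cases v' ⟨i, hi⟩ <;> simp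
  calc 2 ^ m = Fintype.card (Fin m → Bool) := by simp
    _ ≤ #(univ ×ˢ ({S : Finset (Fin m) | #S ≤ d} : Finset _)) :=
        card_le_card_of_injOn encode (fun v _ ↦ by simp [encode, hwrong v]) hinj.injOn
    _ = 2 ^ K * #{S : Finset (Fin m) | #S ≤ d} := by simp [card_product]

theorem pow_mul_pow_sub_le_pow_mul_pow_sub {p q : ℝ} (hp : 0 ≤ p) (hpq : p ≤ q) {k d n : ℕ}
    (hkd : k ≤ d) (hdn : d ≤ n) : p ^ d * q ^ (n - d) ≤ p ^ k * q ^ (n - k) :=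
  calc p ^ d * q ^ (n - d) = p ^ k * (p ^ (d - k) * q ^ (n - d)) := by
        rw [← mul_assoc, ← pow_add, Nat.add_sub_cancel' hkd]
    _ ≤ p ^ k * (q ^ (d - k) * q ^ (n - d)) := by have := hp.trans hpq; gcongr
    _ = p ^ k * q ^ (n - k) := by rw [← pow_add]; congr 2; omega

theorem card_filter_card_le_mul_le_one {ι : Type*} [Fintype ι] {p q : ℝ} (hp : 0 ≤ p)
    (hpq : p ≤ q) (hpq1 : p + q = 1) {d : ℕ} (hd : d ≤ Fintype.card ι) :
    #{S : Finset ι | #S ≤ d} * (p ^ d * q ^ (Fintype.card ι - d)) ≤ 1 :=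
  calc (#{S : Finset ι | #S ≤ d} : ℝ) * (p ^ d * q ^ (Fintype.card ι - d))
      = ∑ S : Finset ι with #S ≤ d, p ^ d * q ^ (Fintype.card ι - d) := by
        rw [sum_const, nsmul_eq_mul]
    _ ≤ ∑ S : Finset ι with #S ≤ d, p ^ #S * q ^ (Fintype.card ι - #S) :=
        sum_le_sum fun S hS ↦
          pow_mul_pow_sub_le_pow_mul_pow_sub hp hpq (mem_filter.1 hS).2 hd
    _ ≤ ∑ S : Finset ι, p ^ #S * q ^ (Fintype.card ι - #S) :=
        sum_le_univ_sum_of_nonneg fun S ↦ by have := hp.trans hpq; positivity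
    _ = 1 := by rw [Fintype.sum_pow_mul_eq_add_pow, hpq1, one_pow]

theorem entropy_mul_le_of_two_pow_le {m K d : ℕ} {p q : ℝ} (hp : 0 < p) (hpq : p ≤ q)
    (hpq1 : p + q = 1) (hd : (d : ℝ) ≤ p * m)
    (h : 2 ^ m ≤ 2 ^ K * #{S : Finset (Fin m) | #S ≤ d}) :
    (1 + p * Real.logb 2 p + q * Real.logb 2 q) * m ≤ K := by
  have hq : 0 < q := hp.trans_le hpq
  have hdm : d ≤ m := by
    have : (d : ℝ) ≤ m := hd.trans (by nlinarith [(Nat.cast_nonneg m : (0 : ℝ) ≤ m)])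
    exact_mod_cast this
  have hcard := card_filter_card_le_mul_le_one hp.le hpq hpq1 (Fintype.card_fin m ▸ hdm)
  rw [Fintype.card_fin] at hcard
  have hpow : (2 : ℝ) ^ m * (p ^ d * q ^ (m - d)) ≤ 2 ^ K :=
    calc (2 : ℝ) ^ m * (p ^ d * q ^ (m - d))
        ≤ 2 ^ K * #{S : Finset (Fin m) | #S ≤ d} * (p ^ d * q ^ (m - d)) := by
          gcongr; exact_mod_cast h
      _ ≤ 2 ^ K := by rw [mul_assoc]; exact mul_le_of_le_one_right (by positivity) hcard
  have hlog := Real.logb_le_logb_of_le one_lt_two (by positivity) hpow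
  rw [Real.logb_mul (by positivity) (by positivity), Real.logb_mul (by positivity)
    (by positivity), Real.logb_pow, Real.logb_pow, Real.logb_pow, Real.logb_pow,
    Real.logb_self_eq_one one_lt_two, Nat.cast_sub hdm] at hlog
  have hlogpq : Real.logb 2 p ≤ Real.logb 2 q := Real.logb_le_logb_of_le one_lt_two hp hpq
  obtain rfl : q = 1 - p := by linarith
  nlinarith [mul_le_mul_of_nonneg_right (sub_nonneg.2 hd) (sub_nonneg.2 hlogpq)]

namespace ListUpdate

variable {α : Type}

theorem UsesAdvice.mono {A : OnlineAdviceAlg α} {φ : ℕ → Bool} {σ : List α} {k k' : ℕ}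
    (h : UsesAdvice A φ σ k) (hk : k ≤ k') : UsesAdvice A φ σ k' :=
  fun ψ hψ ↦ h ψ fun i hi ↦ hψ i (hi.trans_le hk)

section Pair

variable (x y : α)

def item (b : Bool) : α := bif b then y else x

def pairList (c : Bool) : List α := [item x y c, item x y !c]

@[simp] theorem item_false : item x y false = x := rfl

@[simp] theorem item_true : item x y true = y := rfl

def block (b : Bool) : List α := [x, y, item x y b, item x y b, item x y !b]

def blocks (bs : List Bool) : List α := bs.flatMap (block x y)

theorem blocks_cons (b : Bool) (bs : List Bool) :
    blocks x y (b :: bs) = block x y b ++ blocks x y bs := List.flatMap_cons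

theorem length_blocks (bs : List Bool) : (blocks x y bs).length = 5 * bs.length := by
  induction bs with
  | nil => rfl
  | cons b bs ih => simp +arith [blocks_cons, block, ih]

theorem eq_or_eq_of_mem_blocks {bs : List Bool} {r : α} (hr : r ∈ blocks x y bs) :
    r = x ∨ r = y := by
  obtain ⟨b, -, hb⟩ := List.mem_flatMap.1 hr
  cases b <;> simp [block, item] at hb <;> tauto

variable {x y} in
theorem blocks_take_append_prefix {bs : List Bool} {j : ℕ} (hj : j < bs.length) :
    blocks x y (bs.take j) ++ [x, y] <+: blocks x y bs := by
  refine ⟨[item x y bs[j], item x y bs[j], item x y !bs[j]] ++ blocks x y (bs.drop (j + 1)), ?_⟩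
  conv_rhs => rw [← List.take_append_drop j bs, List.drop_eq_getElem_cons hj]
  simp only [blocks, block, List.flatMap_append, List.flatMap_cons, List.append_assoc,
    List.cons_append, List.nil_append]

variable {x y} in
theorem item_ne_item_not (hxy : x ≠ y) (c : Bool) : item x y c ≠ item x y !c := by
  cases c <;> simp [item, hxy, hxy.symm]

end Pair

theorem doPaid_pair (u v : α) (ps : List ℕ) :
    doPaid [u, v] ps = [u, v] ∨ (doPaid [u, v] ps = [v, u] ∧ ps ≠ []) := by
  induction ps generalizing u v with
  | nil => exact .inl rfl
  | cons p ps ih =>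
    rcases p with _ | p
    · rcases ih v u with h | ⟨h, -⟩
      · exact .inr ⟨h, List.cons_ne_nil _ _⟩
      · exact .inl h
    · have hswap : adjSwap [u, v] (p + 1) = [u, v] := by rcases p with _ | p <;> simp [adjSwap]
      rcases ih u v with h | ⟨h, -⟩
      · exact .inl (by simpa [doPaid, hswap] using h)
      · exact .inr ⟨by simpa [doPaid, hswap] using h, List.cons_ne_nil _ _⟩

variable [DecidableEq α]

section Run

variable (A : OnlineAdviceAlg α) (ψ : ℕ → Bool)

def runAdvList : List α → List α → List α → List α
  | _, L, [] => L
  | past, L, r :: σ => runAdvList (past ++ [r]) (stepList L r (A ψ (past ++ [r]))) σ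

theorem runAdvList_append (s t past L : List α) :
    runAdvList A ψ past L (s ++ t) = runAdvList A ψ (past ++ s) (runAdvList A ψ past L s) t := by
  induction s generalizing past L with
  | nil => simp [runAdvList]
  | cons r s ih => simp [runAdvList, ih]

theorem runAdvCost_append (c : ℕ) (s t past L : List α) :
    runAdvCost c A ψ past L (s ++ t) =
      runAdvCost c A ψ past L s + runAdvCost c A ψ (past ++ s) (runAdvList A ψ past L s) t := by
  induction s generalizing past L with
  | nil => simp [runAdvCost, runAdvList]
  | cons r s ih => simp [runAdvCost, runAdvList, ih, Nat.add_assoc]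

variable {A ψ}

theorem runAdvList_congr {ψ' : ℕ → Bool} {s past : List α} (L : List α)
    (h : ∀ t, 0 < t → t ≤ s.length → A ψ (past ++ s.take t) = A ψ' (past ++ s.take t)) :
    runAdvList A ψ past L s = runAdvList A ψ' past L s := by
  induction s generalizing past L with
  | nil => rfl
  | cons r s ih =>
    have hr : A ψ (past ++ [r]) = A ψ' (past ++ [r]) := by simpa using h 1 one_pos (by simp)
    simp only [runAdvList, hr]
    refine ih _ fun t ht hts ↦ ?_
    simpa using h (t + 1) (by omega) (by simpa using hts)

theorem UsesAdvice.runAdvList_eq {φ : ℕ → Bool} {σ s : List α} {k : ℕ}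
    (h : UsesAdvice A φ σ k) (hψ : ∀ i < k, ψ i = φ i) (hs : s <+: σ) (L : List α) :
    runAdvList A ψ [] L s = runAdvList A φ [] L s :=
  runAdvList_congr L fun t ht hts ↦ by
    rw [List.nil_append, List.prefix_iff_eq_take.1 hs, List.take_take, min_eq_left hts]
    exact h ψ hψ t ht (hts.trans hs.length_le)

end Run

section PairSteps

theorem freeMove_pair_front (u v : α) (t : ℕ) : freeMove [u, v] u t = [u, v] := by
  simp [freeMove]

theorem freeMove_pair_back {u v : α} (huv : u ≠ v) (t : ℕ) :
    freeMove [u, v] v t = if t = 0 then [v, u] else [u, v] := by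
  rcases t with _ | t <;> simp [freeMove, huv, List.idxOf_cons_ne _ huv, List.insertIdx]

theorem stepList_pair_front {u v : α} (huv : u ≠ v) (a : Action α) :
    (stepList [u, v] u a = [u, v] ∧ 1 ≤ stepCost 1 [u, v] u a) ∨
      (stepList [u, v] u a = [v, u] ∧ 3 ≤ stepCost 1 [u, v] u a) := by
  rcases doPaid_pair u v a.paid with h | ⟨h, hne⟩
  · exact .inl ⟨by simp [stepList, h, freeMove_pair_front], by unfold stepCost; omega⟩
  · have hlen : 1 ≤ a.paid.length := List.length_pos_iff.mpr hne
    by_cases ht : a.target = 0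
    · refine .inl ⟨by simp [stepList, h, ht, freeMove_pair_back huv.symm], ?_⟩
      unfold stepCost
      omega
    · refine .inr ⟨by simp [stepList, h, ht, freeMove_pair_back huv.symm], ?_⟩
      rw [stepCost, h, List.idxOf_cons_ne _ huv.symm, List.idxOf_cons_self]
      omega

theorem stepList_pair_back {u v : α} (huv : u ≠ v) (a : Action α) :
    (stepList [u, v] v a = [u, v] ∨ stepList [u, v] v a = [v, u]) ∧
      2 ≤ stepCost 1 [u, v] v a := by
  rcases doPaid_pair u v a.paid with h | ⟨h, hne⟩
  · refine ⟨?_, by simp [stepCost, h, List.idxOf_cons_ne _ huv]⟩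
    by_cases ht : a.target = 0 <;> simp [stepList, h, ht, freeMove_pair_back huv]
  · have hlen : 1 ≤ a.paid.length := List.length_pos_iff.mpr hne
    refine ⟨.inr (by simp [stepList, h, freeMove_pair_front]), ?_⟩
    rw [stepCost, h, List.idxOf_cons_self]
    omega

end PairSteps

/-- From configuration `c` to `c'` on a request to `item r`: the back item costs `2` to reach,
and sending the front item back needs a paid exchange. -/
def minStepCost (c c' r : Bool) : ℕ := if r = c then (if c' = c then 1 else 3) else 2

def pairMinCost : Bool → List Bool → ℕ
  | _, [] => 0
  | c, r :: rs =>
    min (minStepCost c false r + pairMinCost false rs)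
      (minStepCost c true r + pairMinCost true rs)

section TwoItems

variable {x y : α} (hxy : x ≠ y)
include hxy

theorem exists_stepList_pairList (c r : Bool) (a : Action α) :
    ∃ c', stepList (pairList x y c) (item x y r) a = pairList x y c' ∧
      minStepCost c c' r ≤ stepCost 1 (pairList x y c) (item x y r) a := by
  have hswap : pairList x y (!c) = [item x y !c, item x y c] := by simp [pairList]
  obtain rfl | rfl : r = c ∨ r = !c := by cases r <;> cases c <;> simp
  · rcases stepList_pair_front (item_ne_item_not hxy r) a with ⟨h1, h2⟩ | ⟨h1, h2⟩
    · exact ⟨r, h1, by simpa [minStepCost, pairList] using h2⟩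
    · exact ⟨!r, hswap ▸ h1, by simpa [minStepCost, pairList] using h2⟩
  · obtain ⟨h1 | h1, h2⟩ := stepList_pair_back (item_ne_item_not hxy c) a
    · exact ⟨c, h1, by simpa [minStepCost, pairList] using h2⟩
    · exact ⟨!c, hswap ▸ h1, by simpa [minStepCost, pairList] using h2⟩

variable (A : OnlineAdviceAlg α) (ψ : ℕ → Bool)

theorem exists_runAdvList_eq_pairList (rs : List Bool) (past : List α) (c : Bool) :
    ∃ c', runAdvList A ψ past (pairList x y c) (rs.map (item x y)) = pairList x y c' := by
  induction rs generalizing past c with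
  | nil => exact ⟨c, rfl⟩
  | cons r rs ih =>
    obtain ⟨c', hc', -⟩ := exists_stepList_pairList hxy c r (A ψ (past ++ [item x y r]))
    simpa only [List.map_cons, runAdvList, hc'] using ih _ c'

theorem pairMinCost_le_runAdvCost (rs : List Bool) (past : List α) (c : Bool) :
    pairMinCost c rs ≤ runAdvCost 1 A ψ past (pairList x y c) (rs.map (item x y)) := by
  induction rs generalizing past c with
  | nil => exact Nat.zero_le _
  | cons r rs ih =>
    obtain ⟨c', hc', hcost⟩ := exists_stepList_pairList hxy c r (A ψ (past ++ [item x y r]))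
    simp only [List.map_cons, runAdvCost, hc']
    have := ih (past ++ [item x y r]) c'
    cases c'
    · exact (min_le_left _ _).trans (by omega)
    · exact (min_le_right _ _).trans (by omega)

end TwoItems

section Blocks

variable (x y : α) (A : OnlineAdviceAlg α) (ψ : ℕ → Bool)

def frontBit (L : List α) : Bool := decide (L.head? = some y)

/-- The configuration right after the prefix `x y` of the next block: guessing that block's bit
wrong costs one extra unit (`block_cost`). -/
def guessAt (past L : List α) (bs : List Bool) : Bool :=
  frontBit y (runAdvList A ψ past L (blocks x y bs ++ [x, y]))

def mistakes (past L : List α) (bs : List Bool) : ℕ :=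
  ∑ i ∈ range bs.length,
    if guessAt x y A ψ past L (bs.take i) = bs.getD i false then 0 else 1

theorem mistakes_cons (past L : List α) (b : Bool) (bs : List Bool) :
    mistakes x y A ψ past L (b :: bs) =
      (if frontBit y (runAdvList A ψ past L [x, y]) = b then 0 else 1) +
        mistakes x y A ψ (past ++ block x y b) (runAdvList A ψ past L (block x y b)) bs := by
  rw [mistakes, List.length_cons, sum_range_succ', add_comm]
  congr 1
  refine sum_congr rfl fun i _ ↦ ?_
  simp [guessAt, blocks, runAdvList_append]

variable {x y}

theorem frontBit_pairList (hxy : x ≠ y) (c : Bool) : frontBit y (pairList x y c) = c := by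
  cases c <;> simp [frontBit, pairList, item, hxy]

theorem block_cost (hxy : x ≠ y) (past : List α) (c b : Bool) :
    7 + (if frontBit y (runAdvList A ψ past (pairList x y c) [x, y]) = b then 0 else 1) ≤
      runAdvCost 1 A ψ past (pairList x y c) (block x y b) := by
  have hsplit : block x y b = [false, true].map (item x y) ++ [b, b, !b].map (item x y) := rfl
  obtain ⟨c', hc'⟩ := exists_runAdvList_eq_pairList hxy A ψ [false, true] past c
  have hprefix := pairMinCost_le_runAdvCost hxy A ψ [false, true] past c
  have hrest := pairMinCost_le_runAdvCost hxy A ψ [b, b, !b] (past ++ [x, y]) c'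
  have hmin : ∀ c c' b : Bool,
      7 + (if c' = b then 0 else 1) ≤
        pairMinCost c [false, true] + pairMinCost c' [b, b, !b] := by
    decide
  rw [hsplit, runAdvCost_append]
  simp only [List.map_cons, List.map_nil, item_false, item_true] at hc' hprefix hrest ⊢
  rw [hc', frontBit_pairList hxy]
  have := hmin c c' b
  omega

theorem add_mistakes_le_runAdvCost (hxy : x ≠ y) (bs : List Bool) (past : List α) (c : Bool) :
    7 * bs.length + mistakes x y A ψ past (pairList x y c) bs ≤
      runAdvCost 1 A ψ past (pairList x y c) (blocks x y bs) := by
  induction bs generalizing past c with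
  | nil => simp [mistakes]
  | cons b bs ih =>
    obtain ⟨c', hc'⟩ := exists_runAdvList_eq_pairList hxy A ψ [false, true, b, b, !b] past c
    rw [← show block x y b = [false, true, b, b, !b].map (item x y) from rfl] at hc'
    have hblock := block_cost A ψ hxy past c b
    have hrest := ih (past ++ block x y b) c'
    rw [mistakes_cons, hc', blocks_cons, runAdvCost_append, hc', List.length_cons]
    omega

end Blocks

section Offline

variable {x y : α}

/-- Target `0` moves the requested item to the front; target `1` leaves a two-item list as is. -/
def blockActions (b : Bool) : List (Action α) :=
  [⟨[], 1⟩, ⟨[], bif b then 0 else 1⟩, ⟨[], 1⟩, ⟨[], 1⟩, ⟨[], bif b then 0 else 1⟩]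

theorem serveCost_blocks (hxy : x ≠ y) (bs : List Bool) :
    serveCost 1 [x, y] (blocks x y bs) (bs.flatMap blockActions) = 7 * bs.length := by
  induction bs with
  | nil => rfl
  | cons b bs ih =>
    cases b <;> simp +arith [blocks_cons, block, blockActions, serveCost, stepCost, stepList,
      doPaid, freeMove, hxy, hxy.symm, List.idxOf_cons_ne, ih]

theorem optCost_blocks_le (hxy : x ≠ y) (bs : List Bool) :
    optCost 1 [x, y] (blocks x y bs) ≤ 7 * bs.length :=
  Nat.sInf_le ⟨bs.flatMap blockActions, by simp [blocks, block, blockActions],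
    serveCost_blocks hxy bs⟩

end Offline

section Reduction

variable {x y : α} (A : OnlineAdviceAlg α)

theorem guessAt_eq_of_usesAdvice {φ ψ : ℕ → Bool} {bs : List Bool} {k j : ℕ}
    (h : UsesAdvice A φ (blocks x y bs) k) (hψ : ∀ i < k, ψ i = φ i) (hj : j < bs.length)
    (L : List α) : guessAt x y A ψ [] L (bs.take j) = guessAt x y A φ [] L (bs.take j) := by
  rw [guessAt, guessAt, h.runAdvList_eq hψ (blocks_take_append_prefix hj)]

theorem mistakes_le_of_competitive (hxy : x ≠ y) {γ : ℝ} (hγ : 0 ≤ γ) {ψ : ℕ → Bool}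
    {bs : List Bool}
    (h : (runAdvCost 1 A ψ [] [x, y] (blocks x y bs) : ℝ) ≤
      γ * optCost 1 [x, y] (blocks x y bs)) :
    (mistakes x y A ψ [] [x, y] bs : ℝ) ≤ (7 * γ - 7) * bs.length := by
  have hcost : (7 * bs.length + mistakes x y A ψ [] [x, y] bs : ℝ) ≤
      runAdvCost 1 A ψ [] [x, y] (blocks x y bs) := by
    exact_mod_cast add_mistakes_le_runAdvCost A ψ hxy bs [] false
  have hopt : (optCost 1 [x, y] (blocks x y bs) : ℝ) ≤ 7 * bs.length := by
    exact_mod_cast optCost_blocks_le hxy bs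
  nlinarith

theorem two_pow_le_of_competitive (hxy : x ≠ y) {γ : ℝ} (hγ : 0 ≤ γ)
    (φ : List α → ℕ → Bool) {m K : ℕ}
    (hcomp : ∀ v : Fin m → Bool, (runAdvCost 1 A (φ (blocks x y (List.ofFn v))) [] [x, y]
      (blocks x y (List.ofFn v)) : ℝ) ≤ γ * optCost 1 [x, y] (blocks x y (List.ofFn v)))
    (hK : ∀ v : Fin m → Bool,
      UsesAdvice A (φ (blocks x y (List.ofFn v))) (blocks x y (List.ofFn v)) K) :
    2 ^ m ≤ 2 ^ K * #{S : Finset (Fin m) | #S ≤ ⌊(7 * γ - 7) * m⌋₊} := by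
  let tape (v : Fin m → Bool) : ℕ → Bool := φ (blocks x y (List.ofFn v))
  let extend (w : Fin K → Bool) (i : ℕ) : Bool := if h : i < K then w ⟨i, h⟩ else false
  refine two_pow_le_of_guessing (fun v i ↦ tape v i)
    (fun w bs ↦ guessAt x y A (extend w) [] [x, y] bs) fun v ↦ ?_
  have hguess (j : Fin m) :
      guessAt x y A (extend fun i ↦ tape v i) [] [x, y] ((List.ofFn v).take j) =
        guessAt x y A (tape v) [] [x, y] ((List.ofFn v).take j) :=
    guessAt_eq_of_usesAdvice A (hK v) (fun _ hi ↦ dif_pos hi) (by simp) _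
  calc #{j : Fin m | guessAt x y A (extend fun i ↦ tape v i) [] [x, y] ((List.ofFn v).take j) ≠
          v j}
      = mistakes x y A (tape v) [] [x, y] (List.ofFn v) := by
        rw [mistakes, card_filter, List.length_ofFn, ← Fin.sum_univ_eq_sum_range]
        refine sum_congr rfl fun j _ ↦ ?_
        simp [hguess, ite_not]
    _ ≤ ⌊(7 * γ - 7) * m⌋₊ :=
        Nat.le_floor (by simpa using mistakes_le_of_competitive A hxy hγ (hcomp v))

end Reduction

end ListUpdate

/-- Any online list-update algorithm with advice on a two-item list that is strictly
`γ`-competitive (cost at most `γ·OPT(σ)` on every `σ`, full cost model), for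
`1 < γ ≤ 15/14`, must read at least
`(1 + (7γ-7)·log₂(7γ-7) + (8-7γ)·log₂(8-7γ))·n/5` bits of advice on some input of
length `n`, for every `n` divisible by `5`. -/
theorem list_update_advice_lower_bound {α : Type} [DecidableEq α]
    (x y : α) (hxy : x ≠ y)
    (γ : ℝ) (hγ1 : 1 < γ) (hγ2 : γ ≤ 15 / 14)
    (A : OnlineAdviceAlg α) (φ : List α → ℕ → Bool)
    (hcomp : ∀ σ : List α, (∀ r ∈ σ, r = x ∨ r = y) →
      (runAdvCost 1 A (φ σ) [] [x, y] σ : ℝ) ≤ γ * (optCost 1 [x, y] σ : ℝ))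
    (n : ℕ) (hn : 5 ∣ n) :
    ∃ σ : List α, σ.length = n ∧ (∀ r ∈ σ, r = x ∨ r = y) ∧
      ∀ k : ℕ, UsesAdvice A (φ σ) σ k →
        (1 + (7 * γ - 7) * Real.logb 2 (7 * γ - 7)
           + (8 - 7 * γ) * Real.logb 2 (8 - 7 * γ)) * n / 5 ≤ (k : ℝ) := by
  obtain ⟨m, rfl⟩ := hn
  by_contra! hsmall
  have hadvice (v : Fin m → Bool) : ∃ k, UsesAdvice A (φ (blocks x y (List.ofFn v)))
      (blocks x y (List.ofFn v)) k ∧ (k : ℝ) < (1 + (7 * γ - 7) * Real.logb 2 (7 * γ - 7)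
        + (8 - 7 * γ) * Real.logb 2 (8 - 7 * γ)) * m := by
    obtain ⟨k, hk, hlt⟩ := hsmall (blocks x y (List.ofFn v)) (by simp [length_blocks])
      fun _ ↦ eq_or_eq_of_mem_blocks x y
    exact ⟨k, hk, by push_cast at hlt; linarith⟩
  choose k hk hlt using hadvice
  obtain ⟨v₀, -, hmax⟩ := exists_max_image univ k univ_nonempty
  have hcount := two_pow_le_of_competitive A hxy (by linarith) φ
    (fun v ↦ hcomp _ fun _ ↦ eq_or_eq_of_mem_blocks x y)
    fun v ↦ (hk v).mono (hmax v (mem_univ v))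
  have hentropy := entropy_mul_le_of_two_pow_le (q := 8 - 7 * γ) (by linarith) (by linarith)
    (by ring) (Nat.floor_le (by nlinarith)) hcount
  linarith [hlt v₀]
end

section
/- Let σ be the request sequence of length n defined by a bitstring on a two-item list initially ordered [x,y]. Then OPT(σ) ≤ 7n/5 under the full cost model. -/
open ListUpdate

/-- The round of requests determined by one bit of the defining bitstring. -/
def roundSeq {α : Type} (x y : α) (b : Bool) : List α :=
  if b then [y, x, x, x, x] else [y, y, y, x, x]

/-- The request sequence defined by the bitstring `B` on the two-item list `[x, y]`. -/
def seqOf {α : Type} (x y : α) (B : List Bool) : List α :=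
  (B.map (roundSeq x y)).flatten

/- Serve every request by moving the requested item to the front. Each round then costs
exactly 7 (for bit 0: `2 + 1 + 1 + 2 + 1`, for bit 1: `2 + 2 + 1 + 1 + 1`) and restores the
list `[x, y]`, so the rounds cost `7m = 7n/5` in total. -/

namespace ListUpdate

variable {α : Type} [DecidableEq α]

theorem optCost_le_serveCost (c : ℕ) (L σ : List α) {as : List (Action α)}
    (h : as.length = σ.length) : optCost c L σ ≤ serveCost c L σ as :=
  Nat.sInf_le ⟨as, h, rfl⟩

theorem serveCost_append (c : ℕ) (L σ τ : List α) {as : List (Action α)}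
    (bs : List (Action α)) (h : as.length = σ.length) :
    serveCost c L (σ ++ τ) (as ++ bs) =
      serveCost c L σ as + serveCost c (serveList L σ as) τ bs := by
  induction σ generalizing L as with
  | nil => simp_all [serveCost, serveList]
  | cons r σ ih =>
    obtain _ | ⟨a, as⟩ := as
    · simp at h
    · simp only [List.cons_append, serveCost, serveList]
      rw [ih _ (by simpa using h), Nat.add_assoc]

def moveToFront : Action α := ⟨[], 0⟩

end ListUpdate

open ListUpdate

theorem seqOf_cons {α : Type} (x y : α) (b : Bool) (B : List Bool) :
    seqOf x y (b :: B) = roundSeq x y b ++ seqOf x y B := by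
  simp [seqOf]

theorem seqOf_length {α : Type} (x y : α) (B : List Bool) :
    (seqOf x y B).length = 5 * B.length := by
  induction B with
  | nil => simp [seqOf]
  | cons b B ih => cases b <;> simp [seqOf_cons, roundSeq, ih] <;> omega

section MoveToFront

variable {α : Type} [DecidableEq α] {x y : α}

theorem serveCost_roundSeq_moveToFront (hxy : x ≠ y) (b : Bool) :
    serveCost 1 [x, y] (roundSeq x y b) (List.replicate 5 moveToFront) = 7 := by
  cases b <;> simp [roundSeq, serveCost, stepCost, stepList, doPaid, freeMove, moveToFront,
    hxy, hxy.symm]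

theorem serveList_roundSeq_moveToFront (hxy : x ≠ y) (b : Bool) :
    serveList [x, y] (roundSeq x y b) (List.replicate 5 moveToFront) = [x, y] := by
  cases b <;> simp [roundSeq, serveList, stepList, doPaid, freeMove, moveToFront,
    hxy, hxy.symm]

theorem serveCost_seqOf_moveToFront (hxy : x ≠ y) (B : List Bool) :
    serveCost 1 [x, y] (seqOf x y B) (List.replicate (5 * B.length) moveToFront) =
      7 * B.length := by
  induction B with
  | nil => simp [seqOf, serveCost]
  | cons b B ih =>
    rw [List.length_cons, Nat.mul_succ, Nat.add_comm, List.replicate_add, seqOf_cons,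
      serveCost_append _ _ _ _ _ (by cases b <;> rfl),
      serveCost_roundSeq_moveToFront hxy, serveList_roundSeq_moveToFront hxy, ih]
    omega

end MoveToFront

/-- For the request sequence `σ` of length `n` defined by a bitstring on a two-item
list initially ordered `[x, y]`, we have `OPT(σ) ≤ 7n/5` under the full cost model. -/
theorem opt_of_defining_bitstring {α : Type} [DecidableEq α] (x y : α) (hxy : x ≠ y)
    (B : List Bool) :
    5 * optCost 1 [x, y] (seqOf x y B) ≤ 7 * (seqOf x y B).length := by
  have hopt : optCost 1 [x, y] (seqOf x y B) ≤ 7 * B.length := by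
    rw [← serveCost_seqOf_moveToFront hxy B]
    exact optCost_le_serveCost 1 [x, y] (seqOf x y B) (by simp [seqOf_length])
  rw [seqOf_length]
  omega
end

section
/- On a list of two items a, b initially ordered [a,b], under the partial cost model, the MTF2 algorithm started with any initial bit assignment serves the sequence consisting of 2i alternating pairs (b,a) (i.e., i repetitions of b,a,b,a) with total cost at most 3i; moreover, for any two complementary initial bit assignments, at least one of the two corresponding runs ends with the list ordered [a,b]. -/
open ListUpdate

/-- `i` repetitions of the four requests `b, a, b, a`. -/
def altBA {α : Type} (a b : α) (i : ℕ) : List α :=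
  (List.replicate i [b, a, b, a]).flatten

/-!
Every item is requested an even number of times in each round `b, a, b, a`, so each
round restores the bits. Within a round each item moves to the front exactly once, and
the list ends up `[b, a]` exactly when `a` moves on its first request and `b` on its
second, i.e. when the bits of `a` and `b` are `1` and `0`; complementary assignments
cannot both be of this kind. Each round costs at most `3`, from either order of the list.
-/

namespace ListUpdate

variable {α : Type} [DecidableEq α]

def mtf2Bits : (α → Bool) → List α → α → Bool
  | bits, [] => bits
  | bits, r :: σ => mtf2Bits (Function.update bits r (!bits r)) σ

theorem mtf2Cost_append (c : ℕ) (bits : α → Bool) (L σ τ : List α) :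
    mtf2Cost c bits L (σ ++ τ) =
      mtf2Cost c bits L σ + mtf2Cost c (mtf2Bits bits σ) (mtf2List bits L σ) τ := by
  induction σ generalizing bits L with
  | nil => simp [mtf2Cost, mtf2Bits, mtf2List]
  | cons r σ ih => simp only [List.cons_append, mtf2Cost, mtf2Bits, mtf2List, ih]; ring

theorem mtf2List_append (bits : α → Bool) (L σ τ : List α) :
    mtf2List bits L (σ ++ τ) = mtf2List (mtf2Bits bits σ) (mtf2List bits L σ) τ := by
  induction σ generalizing bits L with
  | nil => rfl
  | cons r σ ih => exact ih _ _

theorem mtf2Bits_apply (bits : α → Bool) (σ : List α) (z : α) :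
    mtf2Bits bits σ z = (bits z ^^ decide (Odd (σ.count z))) := by
  induction σ generalizing bits with
  | nil => simp [mtf2Bits]
  | cons r σ ih =>
    rw [mtf2Bits, ih, List.count_cons]
    by_cases hz : z = r
    · subst hz
      simp [Nat.odd_add_one, ← Nat.not_even_iff_odd]
    · simp [Function.update_of_ne hz, Ne.symm hz]

theorem mtf2Bits_eq_self_of_even_count {σ : List α} (h : ∀ z, Even (σ.count z))
    (bits : α → Bool) : mtf2Bits bits σ = bits := by
  funext z
  simp [mtf2Bits_apply, Nat.not_odd_iff_even.mpr (h z)]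

theorem mtf2List_perm (bits : α → Bool) {L σ : List α} (h : ∀ r ∈ σ, r ∈ L) :
    (mtf2List bits L σ).Perm L := by
  induction σ generalizing bits L with
  | nil => rfl
  | cons r σ ih =>
    have hstep : (if !bits r then L else r :: L.erase r).Perm L := by
      split
      · rfl
      · exact (List.perm_cons_erase (h r List.mem_cons_self)).symm
    exact (ih _ fun s hs => hstep.mem_iff.mpr (h s (List.mem_cons_of_mem r hs))).trans hstep

end ListUpdate

theorem altBA_succ {α : Type} (a b : α) (i : ℕ) :
    altBA a b (i + 1) = altBA a b i ++ [b, a, b, a] := by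
  simp [altBA, List.replicate_succ']

theorem even_count_altBA {α : Type} [DecidableEq α] (a b : α) (i : ℕ) (z : α) :
    Even ((altBA a b i).count z) := by
  induction i with
  | zero => simp [altBA]
  | succ i ih =>
    rw [altBA_succ, List.count_append]
    refine ih.add ⟨[b, a].count z, ?_⟩
    simp only [List.count_cons, List.count_nil]
    omega

theorem mem_pair_of_mem_altBA {α : Type} {a b z : α} {i : ℕ} (hz : z ∈ altBA a b i) :
    z ∈ [a, b] := by
  simp only [altBA, List.mem_flatten, List.mem_replicate] at hz
  obtain ⟨l, ⟨-, rfl⟩, hz⟩ := hz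
  simp only [List.mem_cons, List.not_mem_nil, or_false] at hz
  simp only [List.mem_cons, List.not_mem_nil, or_false]
  tauto

theorem mtf2_round {α : Type} [DecidableEq α] {a b : α} (hab : a ≠ b) (bits : α → Bool)
    {L : List α} (hL : L.Perm [a, b]) :
    mtf2Cost 0 bits L [b, a, b, a] ≤ 3 ∧
      mtf2List bits L [b, a, b, a] = if bits a && !bits b then [b, a] else [a, b] := by
  rcases List.perm_pair.mp hL with rfl | rfl <;>
    rcases hA : bits a <;> rcases hB : bits b <;>
    simp [mtf2Cost, mtf2List, hA, hB, hab, hab.symm]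

section Alternating

variable {α : Type} [DecidableEq α] {a b : α}

theorem mtf2List_altBA_perm (bits : α → Bool) (i : ℕ) :
    (mtf2List bits [a, b] (altBA a b i)).Perm [a, b] :=
  mtf2List_perm bits fun _ hr => mem_pair_of_mem_altBA hr

theorem mtf2Cost_altBA_le (hab : a ≠ b) (bits : α → Bool) (i : ℕ) :
    mtf2Cost 0 bits [a, b] (altBA a b i) ≤ 3 * i := by
  induction i with
  | zero => simp [altBA, mtf2Cost]
  | succ i ih =>
    rw [altBA_succ, mtf2Cost_append, mtf2Bits_eq_self_of_even_count (even_count_altBA a b i)]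
    have hround := (mtf2_round hab bits (mtf2List_altBA_perm bits i)).1
    omega

theorem mtf2List_altBA_succ (hab : a ≠ b) (bits : α → Bool) (i : ℕ) :
    mtf2List bits [a, b] (altBA a b (i + 1)) = if bits a && !bits b then [b, a] else [a, b] := by
  rw [altBA_succ, mtf2List_append, mtf2Bits_eq_self_of_even_count (even_count_altBA a b i)]
  exact (mtf2_round hab bits (mtf2List_altBA_perm bits i)).2

end Alternating

/-- On the two-item list `[a, b]`, under the partial cost model, MTF2 with any initial
bit assignment serves `i` repetitions of `b, a, b, a` with cost at most `3i`; moreover,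
for any two complementary initial bit assignments, at least one of the two runs ends
with the list ordered `[a, b]`. -/
theorem mtf2_on_alternating {α : Type} [DecidableEq α] (a b : α) (hab : a ≠ b) (i : ℕ) :
    (∀ bits : α → Bool, mtf2Cost 0 bits [a, b] (altBA a b i) ≤ 3 * i) ∧
    (∀ bits : α → Bool,
      mtf2List bits [a, b] (altBA a b i) = [a, b] ∨
      mtf2List (fun z => !(bits z)) [a, b] (altBA a b i) = [a, b]) := by
  refine ⟨fun bits => mtf2Cost_altBA_le hab bits i, fun bits => ?_⟩
  cases i with
  | zero => simp [altBA, mtf2List]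
  | succ i =>
    rw [mtf2List_altBA_succ hab, mtf2List_altBA_succ hab]
    cases bits a <;> cases bits b <;> simp
end

section
/- On a list of two items a, b, under the partial cost model, for any initial list order and any initial bit assignment (p,q) for (a,b), the cost of the MTF2 algorithm started with bits (p,q) plus the cost of the MTF2 algorithm started with the complementary bits (¬p,¬q) for serving the three requests b,a,a is at most 4. -/
/-! On two items every MTF2 cost is explicit. From `[a, b]` the requests `b, a, a` cost
`1` if `b`'s bit is `0`, and otherwise `2` or `3` according to `a`'s bit; from `[b, a]` they
cost `1` or `2` according to `a`'s bit. Complementary bits never select two expensive cases. -/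

namespace ListUpdate

variable {α : Type} [DecidableEq α]

theorem mtf2Cost_nil (c : ℕ) (bits : α → Bool) (L : List α) : mtf2Cost c bits L [] = 0 := by
  rw [mtf2Cost]

theorem mtf2Cost_cons_head (c : ℕ) (bits : α → Bool) (x : α) (L σ : List α) :
    mtf2Cost c bits (x :: L) (x :: σ) =
      c + mtf2Cost c (Function.update bits x (!bits x)) (x :: L) σ := by
  cases h : bits x <;> simp [mtf2Cost, h]

theorem mtf2Cost_cons_second (c : ℕ) (bits : α → Bool) {x y : α} (hxy : x ≠ y) (L σ : List α) :
    mtf2Cost c bits (y :: x :: L) (x :: σ) =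
      (1 + c) + mtf2Cost c (Function.update bits x (!bits x))
        (if bits x then x :: y :: L else y :: x :: L) σ := by
  cases h : bits x <;> simp [mtf2Cost, h, hxy.symm]

theorem mtf2Cost_pair_of_second {x y : α} (hxy : x ≠ y) (c : ℕ) (bits : α → Bool) :
    mtf2Cost c bits [y, x] [x, x] = 2 * c + if bits x then 1 else 2 := by
  rw [mtf2Cost_cons_second c bits hxy]
  cases h : bits x
  · simp only [Bool.false_eq_true, if_false]
    rw [mtf2Cost_cons_second _ _ hxy, mtf2Cost_nil]
    omega
  · simp only [if_true]
    rw [mtf2Cost_cons_head, mtf2Cost_nil]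
    omega

theorem mtf2Cost_baa_of_front_a {a b : α} (hab : a ≠ b) (c : ℕ) (bits : α → Bool) :
    mtf2Cost c bits [a, b] [b, a, a] =
      3 * c + if bits b then (if bits a then 2 else 3) else 1 := by
  rw [mtf2Cost_cons_second c bits hab.symm]
  cases h : bits b
  · simp only [Bool.false_eq_true, if_false]
    rw [mtf2Cost_cons_head, mtf2Cost_cons_head, mtf2Cost_nil]
    omega
  · simp only [if_true]
    rw [mtf2Cost_pair_of_second hab, Function.update_of_ne hab]
    split <;> omega

theorem mtf2Cost_baa_of_front_b {a b : α} (hab : a ≠ b) (c : ℕ) (bits : α → Bool) :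
    mtf2Cost c bits [b, a] [b, a, a] = 3 * c + if bits a then 1 else 2 := by
  rw [mtf2Cost_cons_head, mtf2Cost_pair_of_second hab, Function.update_of_ne hab]
  omega

end ListUpdate

open ListUpdate

/-- On a list of two items `a, b`, under the partial cost model, for any initial order
and any initial bits `(p, q)` for `(a, b)`, the cost of MTF2 started with bits `(p, q)`
plus the cost of MTF2 started with the complementary bits `(¬p, ¬q)` for serving the
requests `b, a, a` is at most `4`. -/
theorem mtf2_on_baa {α : Type} [DecidableEq α] (a b : α) (hab : a ≠ b)
    (L : List α) (hL : L = [a, b] ∨ L = [b, a]) (p q : Bool) :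
    mtf2Cost 0 (fun z => if z = a then p else q) L [b, a, a] +
      mtf2Cost 0 (fun z => if z = a then !p else !q) L [b, a, a] ≤ 4 := by
  rcases hL with rfl | rfl
  · simp only [mtf2Cost_baa_of_front_a hab, if_pos, if_neg hab.symm]
    cases p <;> cases q <;> decide
  · simp only [mtf2Cost_baa_of_front_b hab, if_pos]
    cases p <;> decide
end

section
/- On a list of two items initially ordered [x,y], under the partial cost model, the sequence σ_α consisting of one request to x followed by k repetitions of the block y,x,x,x,y,x,x,x satisfies MTFO(σ_α) = MTFE(σ_α) = 4k and OPT(σ_α) = 2k. -/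
open ListUpdate

/-- `σ_α`: one request to `x` followed by `k` repetitions of `y,x,x,x,y,x,x,x`. -/
def sigmaAlpha {α : Type} (x y : α) (k : ℕ) : List α :=
  x :: (List.replicate k [y, x, x, x, y, x, x, x]).flatten

/-!
Both MTFO and MTFE, started in the right bit state, serve each block `y x x x y x x x` from
`[x, y]` at cost 4 and end it in `[x, y]` with the bits they started with. For OPT, every
consecutive pair of requests `y, x` costs at least 1: either `y` is not in front, or a paid
exchange is made, or `y` stays in front and `x` is then not. Each block contains two such
pairs, and the strategy that never reorders `[x, y]` pays exactly for the two accesses to `y`.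
-/

namespace ListUpdate

variable {α : Type} [DecidableEq α]

theorem mtf2Cost_block (c : ℕ) {x y : α} (hxy : x ≠ y) {b : α → Bool} (hb : b y = !b x)
    (σ : List α) :
    mtf2Cost c b [x, y] ([y, x, x, x, y, x, x, x] ++ σ) = 4 + 8 * c + mtf2Cost c b [x, y] σ := by
  have hrestore : ∀ v w, Function.update (Function.update (Function.update
      (Function.update b y v) x w) y (b y)) x (b x) = b := fun v w => by
    funext z
    by_cases hzx : z = x
    · simp [hzx]
    · simp only [Function.update_apply, hzx, if_false]
      split_ifs with hzy <;> simp [hzy]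
  cases hbx : b x <;> simp only [hbx, Bool.not_false, Bool.not_true] at hb <;>
    simp only [hbx, hb] at hrestore <;>
    simp only [mtf2Cost, List.cons_append, List.nil_append, List.idxOf_cons_self,
      List.idxOf_cons_ne, Nat.succ_eq_add_one, zero_add, List.erase_cons_head,
      List.erase_cons_tail, beq_iff_eq, ne_eq,
      hxy, hxy.symm, not_false_eq_true, hb, hbx, Bool.not_true, Bool.not_false,
      Bool.false_eq_true, ↓reduceIte, Function.update_of_ne, Function.update_self,
      Function.update_idem] <;>
    rw [hrestore] <;> omega

theorem mtf2Cost_blocks (c : ℕ) {x y : α} (hxy : x ≠ y) {b : α → Bool} (hb : b y = !b x)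
    (k : ℕ) :
    mtf2Cost c b [x, y] (List.replicate k [y, x, x, x, y, x, x, x]).flatten = (4 + 8 * c) * k := by
  induction k with
  | zero => simp [mtf2Cost]
  | succ k ih => rw [List.replicate_succ, List.flatten_cons, mtf2Cost_block c hxy hb, ih]; ring

theorem freeMove_of_idxOf_le {L : List α} {r : α} (hr : r ∈ L) {j : ℕ}
    (hj : L.idxOf r ≤ j) :
    freeMove L r j = L := by
  have hlt : L.idxOf r < L.length := List.idxOf_lt_length_iff.mpr hr
  conv_lhs => rw [freeMove, min_eq_right hj, List.erase_eq_eraseIdx_of_idxOf rfl]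
  conv_lhs => enter [3]; rw [← List.getElem_idxOf hlt]
  exact List.insertIdx_eraseIdx_getElem hlt

theorem serveCost_replicate_stay (c : ℕ) (L : List α) :
    ∀ σ : List α, (∀ r ∈ σ, r ∈ L) →
      serveCost c L σ (List.replicate σ.length ⟨[], L.length⟩) =
        (σ.map fun r => L.idxOf r + c).sum
  | [], _ => rfl
  | r :: σ, hσ => by
    have hstay : stepList L r ⟨[], L.length⟩ = L :=
      freeMove_of_idxOf_le (hσ r List.mem_cons_self) List.idxOf_le_length
    rw [List.length_cons, List.replicate_succ, serveCost, hstay,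
      serveCost_replicate_stay c L σ fun r h => hσ r (List.mem_cons_of_mem _ h)]
    simp [stepCost, doPaid]

theorem pos_stepCost_of_idxOf_ne_zero (c : ℕ) {L : List α} {r : α} (hr : L.idxOf r ≠ 0)
    (a : Action α) : 0 < stepCost c L r a := by
  rcases a with ⟨_ | ⟨p, ps⟩, j⟩
  · simp only [stepCost, doPaid, List.length_nil, List.foldl_nil]
    omega
  · simp only [stepCost, List.length_cons]
    omega

theorem one_le_stepCost_add_stepCost (c : ℕ) {x y : α} (hxy : x ≠ y) (L : List α)
    (a b : Action α) : 1 ≤ stepCost c L y a + stepCost c (stepList L y a) x b := by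
  by_cases hpaid : a.paid = []
  · by_cases hy : L.idxOf y = 0
    · have hfront : stepList L y a = y :: L.erase y := by
        simp [stepList, hpaid, doPaid, freeMove, hy]
      have hx := pos_stepCost_of_idxOf_ne_zero c (L := stepList L y a) (r := x)
        (by rw [hfront, List.idxOf_cons_ne _ hxy.symm]; omega) b
      omega
    · have hy := pos_stepCost_of_idxOf_ne_zero c hy a
      omega
  · have hswaps : 0 < a.paid.length := List.length_pos_iff.mpr hpaid
    simp only [stepCost]
    omega

theorem two_mul_le_serveCost_blocks (c : ℕ) {x y : α} (hxy : x ≠ y) (k : ℕ) :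
    ∀ (L : List α) (as : List (Action α)), as.length = 8 * k →
      2 * k ≤ serveCost c L (List.replicate k [y, x, x, x, y, x, x, x]).flatten as := by
  induction k with
  | zero => simp
  | succ k ih =>
    rintro L
      (_ | ⟨a₁, _ | ⟨a₂, _ | ⟨a₃, _ | ⟨a₄, _ | ⟨a₅, _ | ⟨a₆, _ | ⟨a₇, _ | ⟨a₈, as⟩⟩⟩⟩⟩⟩⟩⟩) hlen <;>
      simp only [List.length_cons, List.length_nil] at hlen <;> try omega
    rw [List.replicate_succ, List.flatten_cons]
    simp only [List.cons_append, List.nil_append, serveCost]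
    have hfirst := one_le_stepCost_add_stepCost c hxy L a₁ a₂
    have hsecond := one_le_stepCost_add_stepCost c hxy
      (stepList (stepList (stepList (stepList L y a₁) x a₂) x a₃) x a₄) a₅ a₆
    have hrest := ih (stepList (stepList (stepList (stepList (stepList (stepList (stepList
      (stepList L y a₁) x a₂) x a₃) x a₄) y a₅) x a₆) x a₇) x a₈) as (by omega)
    omega

theorem optCost_eq_of_forall_le_of_exists (c : ℕ) {L σ : List α} {n : ℕ}
    (hle : ∀ as : List (Action α), as.length = σ.length → n ≤ serveCost c L σ as)
    (hattained : ∃ as : List (Action α), as.length = σ.length ∧ serveCost c L σ as = n) :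
    optCost c L σ = n :=
  IsLeast.csInf_eq ⟨hattained, by rintro _ ⟨as, hlen, rfl⟩; exact hle as hlen⟩

end ListUpdate

/-- On the two-item list `[x, y]`, under the partial cost model,
`MTFO(σ_α) = MTFE(σ_α) = 4k` and `OPT(σ_α) = 2k`. -/
theorem costs_on_sigma_alpha {α : Type} [DecidableEq α] (x y : α) (hxy : x ≠ y)
    (k : ℕ) :
    mtfoCost 0 [x, y] (sigmaAlpha x y k) = 4 * k ∧
    mtfeCost 0 [x, y] (sigmaAlpha x y k) = 4 * k ∧
    optCost 0 [x, y] (sigmaAlpha x y k) = 2 * k := by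
  refine ⟨?_, ?_, optCost_eq_of_forall_le_of_exists 0 ?_ ?_⟩
  · have hblocks := mtf2Cost_blocks 0 hxy
      (b := Function.update (fun _ => true) x false) (by simp [hxy.symm]) k
    simp [mtfoCost, sigmaAlpha, mtf2Cost, hblocks]
  · have hblocks := mtf2Cost_blocks 0 hxy
      (b := Function.update (fun _ => false) x true) (by simp [hxy.symm]) k
    simp [mtfeCost, sigmaAlpha, mtf2Cost, hblocks]
  · rintro (_ | ⟨a, as⟩) hlen
    · simp [sigmaAlpha] at hlen
    · exact le_add_left (two_mul_le_serveCost_blocks 0 hxy k _ as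
        (by simpa [sigmaAlpha, mul_comm] using hlen))
  · have hσ : ∀ r ∈ sigmaAlpha x y k, r ∈ [x, y] := by
      simp only [sigmaAlpha, List.mem_cons, List.mem_flatten, List.mem_replicate]
      aesop
    refine ⟨List.replicate _ ⟨[], [x, y].length⟩, List.length_replicate, ?_⟩
    rw [serveCost_replicate_stay 0 _ _ hσ]
    simp [sigmaAlpha, List.idxOf_cons_ne _ hxy, mul_comm]
end

section
/- On a list of two items initially ordered [x,y], under the partial cost model, for every positive integer k the sequence σ consisting of one request to x, followed by k repetitions of the block y,x,x,x,y,x,x,x, followed by 2k repetitions of the block y,y,x,x, satisfies MTFO(σ) = MTFE(σ) = TS(σ) = 10k and OPT(σ) ≤ 6k; in particular each of the three algorithms incurs cost at least (5/3)·OPT(σ) on σ. -/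
open ListUpdate

/-- `σ`: `σ_α` followed by `2k` repetitions of `y,y,x,x`. -/
def sigmaLB {α : Type} (x y : α) (k : ℕ) : List α :=
  sigmaAlpha x y k ++ (List.replicate (2 * k) [y, y, x, x]).flatten

/-!
On `[x, y]` the state of each algorithm at the block boundaries of `σ` stays in a small
invariant set (MTFO/MTFE: the bits of `x` and `y` differ; TS: the history is `x` alone or
begins with `x x x y` or `x x y y`). From there a block `y x x x y x x x` costs MTF2 4 and
TS 2, and a block `y y x x` costs MTF2 3 and TS 4: `10k` in total in both cases. Offline,
leaving `y` behind `x` costs 2 per block in the first phase and move-to-front costs 2 per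
block in the second, `6k` in total.
-/

namespace ListUpdate

theorem exists_cost_flatten_replicate_append {S β : Type*} (P : S → Prop)
    (f : S → List β → ℕ) (b : List β) (c : ℕ)
    (hb : ∀ s, P s → ∀ σ, ∃ s', P s' ∧ f s (b ++ σ) = c + f s' σ) (n : ℕ) :
    ∀ s, P s → ∀ σ, ∃ s', P s' ∧ f s ((List.replicate n b).flatten ++ σ) = n * c + f s' σ := by
  induction n with
  | zero => exact fun s hs σ => ⟨s, hs, by simp⟩
  | succ n ih =>
    intro s hs σ
    obtain ⟨s₁, hs₁, h₁⟩ := hb s hs ((List.replicate n b).flatten ++ σ)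
    obtain ⟨s₂, hs₂, h₂⟩ := ih s₁ hs₁ σ
    refine ⟨s₂, hs₂, ?_⟩
    rw [List.replicate_succ, List.flatten_cons, List.append_assoc, h₁, h₂]
    ring

theorem cost_flatten_replicate_append_flatten_replicate {S β : Type*} (P : S → Prop)
    (f : S → List β → ℕ) (hf : ∀ s, f s [] = 0) (b₁ b₂ : List β) (c₁ c₂ : ℕ)
    (hb₁ : ∀ s, P s → ∀ σ, ∃ s', P s' ∧ f s (b₁ ++ σ) = c₁ + f s' σ)
    (hb₂ : ∀ s, P s → ∀ σ, ∃ s', P s' ∧ f s (b₂ ++ σ) = c₂ + f s' σ)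
    (n₁ n₂ : ℕ) (s : S) (hs : P s) :
    f s ((List.replicate n₁ b₁).flatten ++ (List.replicate n₂ b₂).flatten) = n₁ * c₁ + n₂ * c₂ := by
  obtain ⟨s₁, hs₁, h₁⟩ :=
    exists_cost_flatten_replicate_append P f b₁ c₁ hb₁ n₁ s hs (List.replicate n₂ b₂).flatten
  obtain ⟨s₂, -, h₂⟩ := exists_cost_flatten_replicate_append P f b₂ c₂ hb₂ n₂ s₁ hs₁ []
  rw [h₁, ← List.append_nil (List.replicate n₂ b₂).flatten, h₂, hf, add_zero]

section

variable {α : Type} {x y : α}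

theorem sigmaLB_eq_cons (k : ℕ) : sigmaLB x y k =
    x :: ((List.replicate k [y, x, x, x, y, x, x, x]).flatten ++
      (List.replicate (2 * k) [y, y, x, x]).flatten) := rfl

variable [DecidableEq α]

theorem mtf2Cost_block_yxxxyxxx (hxy : x ≠ y) (bits : α → Bool) (h : bits y = !bits x)
    (σ : List α) : ∃ bits' : α → Bool, bits' y = !bits' x ∧
      mtf2Cost 0 bits [x, y] ([y, x, x, x, y, x, x, x] ++ σ) = 4 + mtf2Cost 0 bits' [x, y] σ := by
  cases hb : bits x <;>
  · simp [mtf2Cost, hb, h, hxy, hxy.symm]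
    refine ⟨_, ?_, by ring⟩
    simp [hxy.symm]

theorem mtf2Cost_block_yyxx (hxy : x ≠ y) (bits : α → Bool) (h : bits y = !bits x)
    (σ : List α) : ∃ bits' : α → Bool, bits' y = !bits' x ∧
      mtf2Cost 0 bits [x, y] ([y, y, x, x] ++ σ) = 3 + mtf2Cost 0 bits' [x, y] σ := by
  cases hb : bits x <;>
  · simp [mtf2Cost, hb, h, hxy, hxy.symm]
    refine ⟨_, ?_, by ring⟩
    simp [hxy.symm]

def TSHistory (x y : α) (h : List α) : Prop :=
  h = [x] ∨ (∃ t, h = x :: x :: x :: y :: t) ∨ ∃ t, h = x :: x :: y :: y :: t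

theorem tsCost_block_yxxxyxxx (hxy : x ≠ y) (h : List α) (hh : TSHistory x y h)
    (σ : List α) : ∃ h', TSHistory x y h' ∧
      tsCost 0 h [x, y] ([y, x, x, x, y, x, x, x] ++ σ) = 2 + tsCost 0 h' [x, y] σ := by
  refine ⟨x :: x :: x :: y :: x :: x :: x :: y :: h, Or.inr (Or.inl ⟨_, rfl⟩), ?_⟩
  rcases hh with rfl | ⟨t, rfl⟩ | ⟨t, rfl⟩ <;> simp [tsCost, tsStep, hxy, hxy.symm, ← add_assoc]

theorem tsCost_block_yyxx (hxy : x ≠ y) (h : List α) (hh : TSHistory x y h)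
    (σ : List α) : ∃ h', TSHistory x y h' ∧
      tsCost 0 h [x, y] ([y, y, x, x] ++ σ) = 4 + tsCost 0 h' [x, y] σ := by
  refine ⟨x :: x :: y :: y :: h, Or.inr (Or.inr ⟨_, rfl⟩), ?_⟩
  rcases hh with rfl | ⟨t, rfl⟩ | ⟨t, rfl⟩ <;> simp [tsCost, tsStep, hxy, hxy.symm, ← add_assoc]

theorem mtf2Cost_const_sigmaLB (hxy : x ≠ y) (b : Bool) (k : ℕ) :
    mtf2Cost 0 (fun _ => b) [x, y] (sigmaLB x y k) = 10 * k := by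
  have hphases := cost_flatten_replicate_append_flatten_replicate (fun bits => bits y = !bits x)
    (fun bits σ => mtf2Cost 0 bits [x, y] σ) (fun _ => rfl) _ _ 4 3
    (mtf2Cost_block_yxxxyxxx hxy) (mtf2Cost_block_yyxx hxy) k (2 * k)
    (Function.update (fun _ => b) x (!b)) (by simp [hxy.symm])
  have hfirst : ∀ σ, mtf2Cost 0 (fun _ => b) [x, y] (x :: σ) =
      mtf2Cost 0 (Function.update (fun _ => b) x (!b)) [x, y] σ := by
    cases b <;> simp [mtf2Cost]
  rw [sigmaLB_eq_cons, hfirst]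
  exact hphases.trans (by ring)

theorem tsCost_sigmaLB (hxy : x ≠ y) (k : ℕ) : tsCost 0 [] [x, y] (sigmaLB x y k) = 10 * k := by
  have hphases := cost_flatten_replicate_append_flatten_replicate (TSHistory x y)
    (fun h σ => tsCost 0 h [x, y] σ) (fun _ => rfl) _ _ 2 4
    (tsCost_block_yxxxyxxx hxy) (tsCost_block_yyxx hxy) k (2 * k) [x] (Or.inl rfl)
  simp [sigmaLB_eq_cons, tsCost, tsStep]
  exact hphases.trans (by ring)

theorem serveCost_append_s9 (c : ℕ) (L : List α) {σ₁ σ₂ : List α} {as₁ as₂ : List (Action α)}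
    (h : as₁.length = σ₁.length) :
    serveCost c L (σ₁ ++ σ₂) (as₁ ++ as₂) =
      serveCost c L σ₁ as₁ + serveCost c (serveList L σ₁ as₁) σ₂ as₂ := by
  induction σ₁ generalizing L as₁ with
  | nil => simp_all [serveCost, serveList]
  | cons r σ₁ ih =>
    obtain _ | ⟨a, as₁⟩ := as₁
    · simp at h
    · simp only [List.cons_append, serveCost, serveList, ih _ (Nat.succ_inj.mp h), add_assoc]

theorem serveCost_flatten_replicate_append (c : ℕ) {L σ : List α} {as : List (Action α)}
    (h : as.length = σ.length) (hL : serveList L σ as = L) (n : ℕ) (τ : List α)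
    (bs : List (Action α)) :
    serveCost c L ((List.replicate n σ).flatten ++ τ) ((List.replicate n as).flatten ++ bs) =
      n * serveCost c L σ as + serveCost c L τ bs := by
  induction n with
  | zero => simp
  | succ n ih =>
    simp only [List.replicate_succ, List.flatten_cons, List.append_assoc,
      serveCost_append_s9 c L h, hL, ih]
    ring

theorem optCost_sigmaLB_le (hxy : x ≠ y) (k : ℕ) : optCost 0 [x, y] (sigmaLB x y k) ≤ 6 * k := by
  let mtf : Action α := ⟨[], 0⟩
  let stay : Action α := ⟨[], 1⟩
  let actsA := [stay, mtf, mtf, mtf, stay, mtf, mtf, mtf]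
  let actsB := [mtf, mtf, mtf, mtf]
  have hx : stepCost 0 [x, y] x mtf = 0 ∧ stepList [x, y] x mtf = [x, y] := by
    simp [mtf, stepCost, stepList, doPaid, freeMove]
  have hA : serveCost 0 [x, y] [y, x, x, x, y, x, x, x] actsA = 2 ∧
      serveList [x, y] [y, x, x, x, y, x, x, x] actsA = [x, y] := by
    simp [actsA, mtf, stay, serveCost, serveList, stepCost, stepList, doPaid, freeMove, hxy]
  have hB : serveCost 0 [x, y] [y, y, x, x] actsB = 2 ∧
      serveList [x, y] [y, y, x, x] actsB = [x, y] := by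
    simp [actsB, mtf, serveCost, serveList, stepCost, stepList, doPaid, freeMove, hxy, hxy.symm]
  apply Nat.sInf_le
  refine ⟨mtf :: ((List.replicate k actsA).flatten ++ ((List.replicate (2 * k) actsB).flatten ++ [])),
    by simp [sigmaLB_eq_cons, actsA, actsB], ?_⟩
  rw [sigmaLB_eq_cons, ← List.append_nil (List.replicate (2 * k) [y, y, x, x]).flatten]
  simp only [serveCost, hx, serveCost_flatten_replicate_append 0 rfl hA.2,
    serveCost_flatten_replicate_append 0 rfl hB.2, hA.1, hB.1]
  ring

end

end ListUpdate

theorem lower_bound_partial_cost_general {α : Type} [DecidableEq α] (x y : α) (hxy : x ≠ y)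
    (k : ℕ) :
    mtfoCost 0 [x, y] (sigmaLB x y k) = 10 * k ∧
    mtfeCost 0 [x, y] (sigmaLB x y k) = 10 * k ∧
    tsCost 0 [] [x, y] (sigmaLB x y k) = 10 * k ∧
    optCost 0 [x, y] (sigmaLB x y k) ≤ 6 * k ∧
    5 * optCost 0 [x, y] (sigmaLB x y k) ≤ 3 * mtfoCost 0 [x, y] (sigmaLB x y k) ∧
    5 * optCost 0 [x, y] (sigmaLB x y k) ≤ 3 * mtfeCost 0 [x, y] (sigmaLB x y k) ∧
    5 * optCost 0 [x, y] (sigmaLB x y k) ≤ 3 * tsCost 0 [] [x, y] (sigmaLB x y k) := by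
  have hmtfo : mtfoCost 0 [x, y] (sigmaLB x y k) = 10 * k := mtf2Cost_const_sigmaLB hxy true k
  have hmtfe : mtfeCost 0 [x, y] (sigmaLB x y k) = 10 * k := mtf2Cost_const_sigmaLB hxy false k
  have hts := tsCost_sigmaLB hxy k
  have hopt := optCost_sigmaLB_le hxy k
  refine ⟨hmtfo, hmtfe, hts, hopt, ?_, ?_, ?_⟩ <;> omega

/-- On the two-item list `[x, y]`, under the partial cost model, for every `k ≥ 1`,
`MTFO(σ) = MTFE(σ) = TS(σ) = 10k` and `OPT(σ) ≤ 6k`; in particular each of the three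
algorithms incurs cost at least `(5/3)·OPT(σ)`. -/
theorem lower_bound_partial_cost {α : Type} [DecidableEq α] (x y : α) (hxy : x ≠ y)
    (k : ℕ) (hk : 0 < k) :
    mtfoCost 0 [x, y] (sigmaLB x y k) = 10 * k ∧
    mtfeCost 0 [x, y] (sigmaLB x y k) = 10 * k ∧
    tsCost 0 [] [x, y] (sigmaLB x y k) = 10 * k ∧
    optCost 0 [x, y] (sigmaLB x y k) ≤ 6 * k ∧
    5 * optCost 0 [x, y] (sigmaLB x y k) ≤ 3 * mtfoCost 0 [x, y] (sigmaLB x y k) ∧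
    5 * optCost 0 [x, y] (sigmaLB x y k) ≤ 3 * mtfeCost 0 [x, y] (sigmaLB x y k) ∧
    5 * optCost 0 [x, y] (sigmaLB x y k) ≤ 3 * tsCost 0 [] [x, y] (sigmaLB x y k) :=
  lower_bound_partial_cost_general x y hxy k
end

section
/- Let a list of l items be initially ordered [a_1,…,a_l] and let σ_γ consist of 2s repetitions of the block a_l,a_l,a_l, a_{l−1},a_{l−1},a_{l−1}, …, a_1,a_1,a_1 (three consecutive requests to each item, in reverse list order). Under the full cost model, MTFO(σ_γ) = MTFE(σ_γ) = s·(3l² + 3l), TS(σ_γ) = s·(4l² + 2l), and OPT(σ_γ) ≤ s·(2l² + 4l). -/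
open ListUpdate

/-- The block of `σ_γ`: three consecutive requests to each item, in reverse list order
(items are `0,…,l-1`, initially in the order `0,…,l-1`). -/
def blockGamma (l : ℕ) : List ℕ :=
  (((List.range l).reverse).map (fun i => [i, i, i])).flatten

/-- `σ_γ`: `2s` repetitions of the block. -/
def sigmaGamma (l s : ℕ) : List ℕ := (List.replicate (2 * s) (blockGamma l)).flatten


/-! Each block rotates the list back to its initial order: when the triple of an item starts, the
item is at the back of the list, and each of MTF, MTFO, MTFE and TS has moved it to the front by
the end of the triple. Per triple, MTF and an MTF2 whose bit is 1 pay `l + 1 + 1`, an MTF2 whose bit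
is 0 pays `l + l + 1`, and a triple flips the bit, so MTFO and MTFE alternate between the two kinds
of block. TS also pays `l + l + 1`: on the first request of a triple it does not move (the item was
never requested, or every item in front of it was requested three times since), and on the second
it moves the item to the front. OPT is at most the cost of MTF. -/

namespace ListUpdate

open List

section Triples

variable {α : Type}

def triples (xs : List α) : List α := xs.flatMap fun x => [x, x, x]

@[simp]
lemma triples_nil : triples ([] : List α) = [] := rfl

@[simp]
lemma triples_cons (x : α) (xs : List α) : triples (x :: xs) = x :: x :: x :: triples xs := rfl

@[simp]
lemma triples_append (xs ys : List α) : triples (xs ++ ys) = triples xs ++ triples ys :=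
  flatMap_append

@[simp]
lemma mem_triples {x : α} {xs : List α} : x ∈ triples xs ↔ x ∈ xs := by
  simp [triples]

lemma two_le_count_triples [BEq α] [LawfulBEq α] {x : α} {xs : List α} (hx : x ∈ xs) :
    2 ≤ (triples xs).count x := by
  induction xs with
  | nil => cases hx
  | cons y xs ih =>
    rcases mem_cons.mp hx with rfl | hx
    · simp
    · have := ih hx
      simp only [triples_cons, count_cons]
      omega

end Triples

lemma blockGamma_eq_triples (l : ℕ) : blockGamma l = triples (range l).reverse := rfl

lemma sigmaGamma_zero (l : ℕ) : sigmaGamma l 0 = [] := rfl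

lemma sigmaGamma_succ (l s : ℕ) :
    sigmaGamma l (s + 1) = blockGamma l ++ (blockGamma l ++ sigmaGamma l s) := by
  rw [sigmaGamma, sigmaGamma, show 2 * (s + 1) = 2 * s + 1 + 1 by ring]
  simp [replicate_succ]

section RotatedRange

/-- `[k, …, l-1, 0, …, k-1]`: the list once the triples of `l-1, …, k` of a block are served. -/
def rotatedRange (l k : ℕ) : List ℕ := range' k (l - k) ++ range k

lemma rotatedRange_zero (l : ℕ) : rotatedRange l 0 = range l := by
  simp [rotatedRange, range_eq_range']

lemma rotatedRange_self (l : ℕ) : rotatedRange l l = range l := by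
  simp [rotatedRange]

variable {l k : ℕ}

lemma range'_eq_cons (hk : k < l) : range' k (l - k) = k :: range' (k + 1) (l - (k + 1)) := by
  rw [show l - k = l - (k + 1) + 1 by omega, range'_succ]

lemma not_mem_range'_append_range : k ∉ range' (k + 1) (l - (k + 1)) ++ range k := by
  simp only [mem_append, mem_range', mem_range]
  omega

lemma rotatedRange_succ :
    rotatedRange l (k + 1) = (range' (k + 1) (l - (k + 1)) ++ range k) ++ [k] := by
  simp [rotatedRange, range_succ]

lemma rotatedRange_eq_cons (hk : k < l) :
    rotatedRange l k = k :: (range' (k + 1) (l - (k + 1)) ++ range k) := by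
  rw [rotatedRange, range'_eq_cons hk, cons_append]

lemma idxOf_rotatedRange_succ (hk : k < l) : (rotatedRange l (k + 1)).idxOf k = l - 1 := by
  rw [rotatedRange_succ, idxOf_append_of_notMem not_mem_range'_append_range]
  simp
  omega

lemma cons_erase_rotatedRange_succ (hk : k < l) :
    k :: (rotatedRange l (k + 1)).erase k = rotatedRange l k := by
  rw [rotatedRange_succ, erase_append_right _ not_mem_range'_append_range, rotatedRange_eq_cons hk]
  simp

lemma range_eq_append (hk : k < l) : range l = range k ++ k :: range' (k + 1) (l - (k + 1)) := by
  rw [← range'_eq_cons hk, range_eq_range', range_eq_range']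
  simpa [Nat.add_sub_cancel' hk.le] using (range'_append_1 (s := 0) (m := k) (n := l - k)).symm

end RotatedRange

section Algorithms

variable {α : Type} [DecidableEq α]

lemma mtf2Cost_triple (c : ℕ) (bits : α → Bool) (L : List α) (x : α) (σ : List α) :
    mtf2Cost c bits L (x :: x :: x :: σ) =
      (if bits x then 1 else 2) * L.idxOf x + 3 * c +
        mtf2Cost c (Function.update bits x (!bits x)) (x :: L.erase x) σ := by
  cases hb : bits x <;> simp [mtf2Cost, hb] <;> omega

def mtfCost (c : ℕ) : List α → List α → ℕ
  | _, [] => 0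
  | L, r :: σ => (L.idxOf r + c) + mtfCost c (r :: L.erase r) σ

lemma mtfCost_triple (c : ℕ) (L : List α) (x : α) (σ : List α) :
    mtfCost c L (x :: x :: x :: σ) = L.idxOf x + 3 * c + mtfCost c (x :: L.erase x) σ := by
  simp [mtfCost]
  omega

lemma serveCost_replicate_eq_mtfCost (c : ℕ) (L σ : List α) :
    serveCost c L σ (replicate σ.length ⟨[], 0⟩) = mtfCost c L σ := by
  induction σ generalizing L with
  | nil => rfl
  | cons r σ ih =>
    simp [serveCost, mtfCost, stepCost, stepList, doPaid, freeMove, replicate_succ, ih]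

lemma optCost_le_mtfCost (c : ℕ) (L σ : List α) : optCost c L σ ≤ mtfCost c L σ :=
  Nat.sInf_le ⟨_, length_replicate, serveCost_replicate_eq_mtfCost c L σ⟩

lemma tsStep_of_not_mem {h : List α} {x : α} (L : List α) (hx : x ∉ h) : tsStep h L x = L := by
  simp [tsStep, hx]

lemma takeWhile_ne_append_cons {x : α} {pre : List α} (M : List α) (hx : x ∉ pre) :
    (pre ++ x :: M).takeWhile (fun w => decide (w ≠ x)) = pre := by
  rw [takeWhile_append_of_pos (by grind), takeWhile_cons_of_neg (by simp), append_nil]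

lemma dropWhile_ne_append_cons {x : α} {pre : List α} (M : List α) (hx : x ∉ pre) :
    (pre ++ x :: M).dropWhile (fun w => decide (w ≠ x)) = x :: M := by
  rw [dropWhile_append_of_pos (by grind), dropWhile_cons_of_neg (by simp)]

lemma tsStep_cons_self (h : List α) {L : List α} {x : α} (hx : x ∈ L) :
    tsStep (x :: h) L x = x :: L.erase x := by
  obtain ⟨pre, M, rfl, hpre⟩ := eq_append_cons_of_mem hx
  rw [tsStep, if_pos mem_cons_self]
  have hnil : pre.takeWhile (fun _ => false) = [] := by cases pre <;> rfl
  simp only [takeWhile_cons_of_neg (p := fun w => decide (w ≠ x)) (a := x) (l := h) (by simp),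
    takeWhile_ne_append_cons M hpre, dropWhile_ne_append_cons M hpre]
  simp [hnil, erase_append_right _ hpre]

lemma tsStep_triples_append_cons (h M : List α) {x : α} {pre : List α} (hx : x ∉ pre) :
    tsStep (triples pre ++ x :: h) (pre ++ x :: M) x = pre ++ x :: M := by
  have hkeep : pre.takeWhile (fun z => decide (2 ≤ (triples pre).count z)) = pre :=
    takeWhile_eq_self_iff.mpr fun z hz => by simpa using two_le_count_triples hz
  rw [tsStep, if_pos (by simp)]
  simp only [takeWhile_ne_append_cons h (mt mem_triples.mp hx),
    takeWhile_ne_append_cons M hx, dropWhile_ne_append_cons M hx, hkeep]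
  simp

lemma tsCost_triple (c : ℕ) (h : List α) {L : List α} {x : α} (σ : List α) (hx : x ∈ L)
    (hstay : tsStep h L x = L) :
    tsCost c h L (x :: x :: x :: σ) =
      2 * L.idxOf x + 3 * c + tsCost c (x :: x :: x :: h) (x :: L.erase x) σ := by
  simp [tsCost, hstay, tsStep_cons_self h hx, tsStep_cons_self (x :: h) (mem_cons_self (a := x))]
  omega

end Algorithms

section Blocks

variable {l : ℕ}

lemma triples_range_succ_reverse (k : ℕ) (σ : List ℕ) :
    triples (range (k + 1)).reverse ++ σ = k :: k :: k :: (triples (range k).reverse ++ σ) := by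
  simp [range_succ]

lemma mtfCost_block (σ : List ℕ) {k : ℕ} (hk : k ≤ l) :
    mtfCost 1 (rotatedRange l k) (triples (range k).reverse ++ σ) =
      k * (l + 2) + mtfCost 1 (range l) σ := by
  induction k with
  | zero => simp [rotatedRange_zero]
  | succ k ih =>
    rw [triples_range_succ_reverse, mtfCost_triple, idxOf_rotatedRange_succ hk,
      cons_erase_rotatedRange_succ hk, ih (by omega)]
    grind

lemma mtf2Cost_block_s11 (σ : List ℕ) {k : ℕ} (hk : k ≤ l) (b : Bool) {bits : ℕ → Bool}
    (hbits : ∀ j < k, bits j = b) :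
    mtf2Cost 1 bits (rotatedRange l k) (triples (range k).reverse ++ σ) =
      k * (if b then l + 2 else 2 * l + 1) +
        mtf2Cost 1 (fun j => if j < k then !b else bits j) (range l) σ := by
  induction k generalizing bits with
  | zero => simp [rotatedRange_zero]
  | succ k ih =>
    have hbk : bits k = b := hbits k (by omega)
    have hflip : (fun j => if j < k then !b else Function.update bits k (!b) j) =
        fun j => if j < k + 1 then !b else bits j := by
      funext j
      by_cases hj : j = k
      · simp [hj]
      · simp only [Function.update_of_ne hj]
        grind
    rw [triples_range_succ_reverse, mtf2Cost_triple, idxOf_rotatedRange_succ hk,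
      cons_erase_rotatedRange_succ hk, hbk,
      ih (by omega) fun j hj => by
        simp [Function.update_of_ne (by omega : j ≠ k), hbits j (by omega)], hflip]
    cases b <;> simp <;> grind

lemma tsStep_rotatedRange {h : List ℕ}
    (hh : h = [] ∨ ∃ rest, h = triples (range l) ++ rest) {j : ℕ} (hj : j < l) :
    tsStep (triples (range' (j + 1) (l - (j + 1))) ++ h) (rotatedRange l (j + 1)) j =
      rotatedRange l (j + 1) := by
  rcases hh with rfl | ⟨rest, rfl⟩
  · exact tsStep_of_not_mem _ (by simp only [append_nil, mem_triples, mem_range']; omega)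
  · rw [range_eq_append hj, rotatedRange_succ]
    simpa using tsStep_triples_append_cons
      (j :: j :: triples (range' (j + 1) (l - (j + 1))) ++ rest) [] not_mem_range'_append_range

lemma tsCost_block (σ : List ℕ) {h : List ℕ}
    (hh : h = [] ∨ ∃ rest, h = triples (range l) ++ rest) {k : ℕ} (hk : k ≤ l) :
    tsCost 1 (triples (range' k (l - k)) ++ h) (rotatedRange l k)
        (triples (range k).reverse ++ σ) =
      k * (2 * l + 1) + tsCost 1 (triples (range l) ++ h) (range l) σ := by
  induction k with
  | zero => simp [rotatedRange_zero, range_eq_range']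
  | succ k ih =>
    rw [triples_range_succ_reverse,
      tsCost_triple 1 _ _ (by simp [rotatedRange_succ]) (tsStep_rotatedRange hh hk),
      idxOf_rotatedRange_succ hk, cons_erase_rotatedRange_succ hk]
    have hhist : k :: k :: k :: (triples (range' (k + 1) (l - (k + 1))) ++ h) =
        triples (range' k (l - k)) ++ h := by
      simp [range'_eq_cons hk]
    rw [hhist, ih (by omega)]
    grind

lemma mtfCost_blockGamma_append (σ : List ℕ) :
    mtfCost 1 (range l) (blockGamma l ++ σ) = l * (l + 2) + mtfCost 1 (range l) σ := by
  simpa [blockGamma_eq_triples, rotatedRange_self] using mtfCost_block σ le_rfl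

lemma mtf2Cost_blockGamma_append (σ : List ℕ) (b : Bool) {bits : ℕ → Bool}
    (hbits : ∀ j < l, bits j = b) :
    mtf2Cost 1 bits (range l) (blockGamma l ++ σ) =
      l * (if b then l + 2 else 2 * l + 1) +
        mtf2Cost 1 (fun j => if j < l then !b else bits j) (range l) σ := by
  simpa [blockGamma_eq_triples, rotatedRange_self] using mtf2Cost_block_s11 σ le_rfl b hbits

lemma tsCost_blockGamma_append (σ : List ℕ) {h : List ℕ}
    (hh : h = [] ∨ ∃ rest, h = triples (range l) ++ rest) :
    tsCost 1 h (range l) (blockGamma l ++ σ) =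
      l * (2 * l + 1) + tsCost 1 (triples (range l) ++ h) (range l) σ := by
  simpa [blockGamma_eq_triples, rotatedRange_self] using tsCost_block σ hh le_rfl

end Blocks

lemma mtfCost_sigmaGamma (l s : ℕ) :
    mtfCost 1 (range l) (sigmaGamma l s) = s * (2 * l ^ 2 + 4 * l) := by
  induction s with
  | zero => simp [sigmaGamma_zero, mtfCost]
  | succ s ih =>
    rw [sigmaGamma_succ, mtfCost_blockGamma_append, mtfCost_blockGamma_append, ih]
    ring

lemma mtf2Cost_sigmaGamma (l s : ℕ) (b : Bool) {bits : ℕ → Bool}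
    (hbits : ∀ j < l, bits j = b) :
    mtf2Cost 1 bits (range l) (sigmaGamma l s) = s * (3 * l ^ 2 + 3 * l) := by
  induction s generalizing bits with
  | zero => simp [sigmaGamma_zero, mtf2Cost]
  | succ s ih =>
    rw [sigmaGamma_succ, mtf2Cost_blockGamma_append _ b hbits,
      mtf2Cost_blockGamma_append _ (!b) fun j hj => by simp [hj], ih fun j hj => by simp [hj]]
    cases b <;> simp <;> ring

lemma tsCost_sigmaGamma (l s : ℕ) {h : List ℕ}
    (hh : h = [] ∨ ∃ rest, h = triples (range l) ++ rest) :
    tsCost 1 h (range l) (sigmaGamma l s) = s * (4 * l ^ 2 + 2 * l) := by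
  induction s generalizing h with
  | zero => simp [sigmaGamma_zero, tsCost]
  | succ s ih =>
    rw [sigmaGamma_succ, tsCost_blockGamma_append _ hh,
      tsCost_blockGamma_append _ (Or.inr ⟨h, rfl⟩), ih (Or.inr ⟨_, rfl⟩)]
    ring

end ListUpdate

/-- Under the full cost model, `MTFO(σ_γ) = MTFE(σ_γ) = s·(3l² + 3l)`,
`TS(σ_γ) = s·(4l² + 2l)`, and `OPT(σ_γ) ≤ s·(2l² + 4l)`. -/
theorem costs_on_sigma_gamma (l s : ℕ) :
    mtfoCost 1 (List.range l) (sigmaGamma l s) = s * (3 * l ^ 2 + 3 * l) ∧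
    mtfeCost 1 (List.range l) (sigmaGamma l s) = s * (3 * l ^ 2 + 3 * l) ∧
    tsCost 1 [] (List.range l) (sigmaGamma l s) = s * (4 * l ^ 2 + 2 * l) ∧
    optCost 1 (List.range l) (sigmaGamma l s) ≤ s * (2 * l ^ 2 + 4 * l) :=
  ⟨mtf2Cost_sigmaGamma l s true fun _ _ => rfl,
    mtf2Cost_sigmaGamma l s false fun _ _ => rfl,
    tsCost_sigmaGamma l s (Or.inl rfl),
    (optCost_le_mtfCost 1 _ _).trans_eq (mtfCost_sigmaGamma l s)⟩
end

section
/- For every initial list and every request sequence σ, under the full cost model, MTFO(σ) + MTFE(σ) ≤ 4·OPT(σ). -/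
/-!
Potential-function argument. Compare each list `M` kept by an MTF2 algorithm with the list `N`
of an optimal offline algorithm, and charge every inversion (a pair `y, x` with `y` before `x` in
`M` but after `x` in `N`) to `x`, with weight `1` if the next request to `x` moves `x` to the
front and weight `2` if it does not. MTFO and MTFE have complementary bits, so on each request
exactly one of them moves the requested item `r` to the front.

Let `r` be at position `i` in `N` after the paid exchanges, and let OPT move it to position
`k ≤ i`. If `I` counts the inversions charged to `r`, an algorithm pays at most `I + i + 1`.
The run that moves `r` loses the `I` inversions of weight `1` at `r` and creates at most `k`
of weight at most `2`, so its amortized cost is at most `i + 1 + 2k`. In the other run the weight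
of `r` drops from `2` to `1` and `r` gains at most `i - k` inversions, so its amortized cost is at
most `2i + 1 - k`. Together this is at most `4 (i + 1)`, four times OPT's access cost. A paid
exchange creates one inversion and so raises each potential by at most `2`.
-/

namespace ListUpdate

variable {α : Type}

theorem adjSwap_eq_self_or_swap (N : List α) (i : ℕ) :
    adjSwap N i = N ∨
      ∃ T a b t, N = T ++ a :: b :: t ∧ adjSwap N i = T ++ b :: a :: t := by
  have hN := List.take_append_drop i N
  rcases hd : N.drop i with _ | ⟨a, _ | ⟨b, t⟩⟩ <;> rw [hd] at hN <;> simp only [adjSwap, hd]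
  · exact .inl hN
  · exact .inl hN
  · exact .inr ⟨_, a, b, t, hN.symm, rfl⟩

theorem adjSwap_perm (N : List α) (i : ℕ) : (adjSwap N i).Perm N := by
  rcases adjSwap_eq_self_or_swap N i with h | ⟨T, a, b, t, rfl, h⟩
  · rw [h]
  · rw [h]; exact (List.Perm.swap a b t).append_left T

theorem doPaid_perm (N : List α) (ps : List ℕ) : (doPaid N ps).Perm N := by
  induction ps generalizing N with
  | nil => rfl
  | cons p ps ih => exact (ih (adjSwap N p)).trans (adjSwap_perm N p)

section

variable [DecidableEq α]

theorem idxOf_lt_idxOf_iff_pair_sublist {l : List α} (hl : l.Nodup) {x y : α} (hy : y ∈ l) :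
    l.idxOf x < l.idxOf y ↔ [x, y].Sublist l := by
  induction l with
  | nil => simp at hy
  | cons a t ih =>
    obtain ⟨hat, ht⟩ := List.nodup_cons.1 hl
    by_cases hxa : x = a <;> by_cases hya : y = a
    · subst hxa hya; simp [hat]
    · subst hxa; simp_all [List.idxOf_cons_ne _ (Ne.symm hya)]
    · subst hya; simp [List.idxOf_cons_ne _ (Ne.symm hxa), List.sublist_cons_iff, hxa]
      intro h; exact hat (h.subset (by simp))
    · have hyt : y ∈ t := by simpa [hya] using hy
      rw [List.idxOf_cons_ne _ (Ne.symm hxa), List.idxOf_cons_ne _ (Ne.symm hya),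
        Nat.succ_lt_succ_iff, ih ht hyt]
      simp [List.sublist_cons_iff, hxa]

theorem idxOf_lt_idxOf_iff_of_sublist {l' l : List α} (hl : l.Nodup) (hs : l'.Sublist l)
    {x y : α} (hx : x ∈ l') (hy : y ∈ l') :
    l'.idxOf x < l'.idxOf y ↔ l.idxOf x < l.idxOf y := by
  have hl' := hl.sublist hs
  constructor
  · intro h
    rw [idxOf_lt_idxOf_iff_pair_sublist hl' hy] at h
    exact (idxOf_lt_idxOf_iff_pair_sublist hl (hs.subset hy)).2 (h.trans hs)
  · intro h
    by_contra hxy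
    have hyx : l'.idxOf y < l'.idxOf x := by
      refine lt_of_le_of_ne (not_lt.1 hxy) fun e => ?_
      rw [(List.idxOf_inj hy).1 e] at h
      exact lt_irrefl _ h
    rw [idxOf_lt_idxOf_iff_pair_sublist hl' hx] at hyx
    have := (idxOf_lt_idxOf_iff_pair_sublist hl (hs.subset hx)).2 (hyx.trans hs)
    omega

theorem idxOf_lt_idxOf_iff_of_common_sublist {l M N : List α} (hM : M.Nodup) (hN : N.Nodup)
    (hlM : l.Sublist M) (hlN : l.Sublist N) {x y : α} (hx : x ∈ l) (hy : y ∈ l) :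
    M.idxOf x < M.idxOf y ↔ N.idxOf x < N.idxOf y := by
  rw [← idxOf_lt_idxOf_iff_of_sublist hM hlM hx hy, idxOf_lt_idxOf_iff_of_sublist hN hlN hx hy]

theorem card_filter_idxOf_lt {L N : List α} (hL : L.Nodup) (hN : N.Perm L) (k : ℕ) :
    (L.toFinset.filter (fun y => N.idxOf y < k)).card = min k L.length := by
  have hfilter : L.toFinset.filter (fun y => N.idxOf y < k) = (N.take k).toFinset := by
    ext y
    simp only [Finset.mem_filter, List.mem_toFinset, ← hN.mem_iff]
    exact ⟨fun h => (List.mem_take_iff_idxOf_lt h.1).2 h.2,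
      fun h => ⟨List.mem_of_mem_take h, (List.mem_take_iff_idxOf_lt (List.mem_of_mem_take h)).1 h⟩⟩
  rw [hfilter, List.toFinset_card_of_nodup ((hN.nodup_iff.2 hL).sublist (List.take_sublist _ _)),
    List.length_take, hN.length_eq]

theorem card_filter_idxOf_lt_of_le {L N : List α} (hL : L.Nodup) (hN : N.Perm L) {k : ℕ}
    (hk : k ≤ L.length) : (L.toFinset.filter (fun y => N.idxOf y < k)).card = k := by
  rw [card_filter_idxOf_lt hL hN, min_eq_left hk]

section FreeMove

variable {N : List α} {r : α}

theorem min_idxOf_le_length_erase (hr : r ∈ N) (j : ℕ) :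
    min j (N.idxOf r) ≤ (N.erase r).length := by
  rw [List.length_erase_of_mem hr]
  have := List.idxOf_lt_length_of_mem hr
  omega

theorem freeMove_perm (hr : r ∈ N) (j : ℕ) : (freeMove N r j).Perm N :=
  (List.perm_insertIdx r _ (min_idxOf_le_length_erase hr j)).trans (List.perm_cons_erase hr).symm

theorem erase_sublist_freeMove (r : α) (j : ℕ) : (N.erase r).Sublist (freeMove N r j) :=
  List.sublist_insertIdx _ _ _

theorem idxOf_freeMove_self (hN : N.Nodup) (hr : r ∈ N) (j : ℕ) :
    (freeMove N r j).idxOf r = min j (N.idxOf r) := by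
  have hlen : min j (N.idxOf r) < (freeMove N r j).length := by
    rw [(freeMove_perm hr j).length_eq]
    have := List.idxOf_lt_length_of_mem hr
    omega
  have hget : (freeMove N r j)[min j (N.idxOf r)] = r := List.getElem_insertIdx_self hlen
  have := ((freeMove_perm hr j).nodup_iff.2 hN).idxOf_getElem _ hlen
  rwa [hget] at this

theorem take_freeMove (r : α) (j : ℕ) :
    (freeMove N r j).take (min j (N.idxOf r)) = N.take (min j (N.idxOf r)) := by
  rw [freeMove, List.take_insertIdx_eq_take_of_le _ _ _ _ le_rfl,
    ← List.eraseIdx_idxOf_eq_erase, List.take_eraseIdx_eq_take_of_le _ _ _ (min_le_right _ _)]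

theorem idxOf_lt_idxOf_freeMove_self_iff (hN : N.Nodup) (hr : r ∈ N) (j : ℕ) {x : α}
    (hx : x ∈ N) :
    (freeMove N r j).idxOf x < (freeMove N r j).idxOf r ↔ N.idxOf x < min j (N.idxOf r) := by
  rw [idxOf_freeMove_self hN hr, ← List.mem_take_iff_idxOf_lt ((freeMove_perm hr j).mem_iff.2 hx),
    take_freeMove, List.mem_take_iff_idxOf_lt hx]

theorem idxOf_lt_idxOf_freeMove_iff (hN : N.Nodup) (hr : r ∈ N) (j : ℕ) {x y : α}
    (hx : x ∈ N) (hy : y ∈ N) (hxr : x ≠ r) (hyr : y ≠ r) :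
    (freeMove N r j).idxOf x < (freeMove N r j).idxOf y ↔ N.idxOf x < N.idxOf y :=
  idxOf_lt_idxOf_iff_of_common_sublist ((freeMove_perm hr j).nodup_iff.2 hN) hN
    (erase_sublist_freeMove r j) (List.erase_sublist ..)
    ((List.mem_erase_of_ne hxr).2 hx) ((List.mem_erase_of_ne hyr).2 hy)

end FreeMove

theorem idxOf_lt_idxOf_cons_erase_iff {M : List α} (hM : M.Nodup) {r x y : α}
    (hx : x ∈ M) (hy : y ∈ M) (hxr : x ≠ r) (hyr : y ≠ r) :
    (r :: M.erase r).idxOf x < (r :: M.erase r).idxOf y ↔ M.idxOf x < M.idxOf y := by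
  rw [List.idxOf_cons_ne _ hxr.symm, List.idxOf_cons_ne _ hyr.symm, Nat.succ_lt_succ_iff]
  exact idxOf_lt_idxOf_iff_of_sublist hM (List.erase_sublist ..)
    ((List.mem_erase_of_ne hxr).2 hx) ((List.mem_erase_of_ne hyr).2 hy)

theorem eq_and_eq_of_swap_reverses {T t : List α} {a b x y : α}
    (hN : (T ++ a :: b :: t).Nodup) (hx : x ∈ T ++ a :: b :: t) (hy : y ∈ T ++ a :: b :: t)
    (hswap : (T ++ b :: a :: t).idxOf x < (T ++ b :: a :: t).idxOf y)
    (hnot : ¬ (T ++ a :: b :: t).idxOf x < (T ++ a :: b :: t).idxOf y) : x = b ∧ y = a := by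
  have hN' : (T ++ b :: a :: t).Nodup :=
    ((List.Perm.swap a b t).append_left T).nodup_iff.2 hN
  have hab : a ≠ b := by rintro rfl; simp [List.nodup_append] at hN
  have ha : x = a ∨ y = a := by
    by_contra! h
    refine hnot ((idxOf_lt_idxOf_iff_of_common_sublist hN hN'
      ((List.sublist_cons_self a _).append_left T)
      (((List.sublist_cons_self a t).cons_cons b).append_left T) ?_ ?_).2 hswap) <;> simp_all
  have hb : x = b ∨ y = b := by
    by_contra! h
    refine hnot ((idxOf_lt_idxOf_iff_of_common_sublist hN hN'
      (((List.sublist_cons_self b t).cons_cons a).append_left T)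
      ((List.sublist_cons_self b _).append_left T) ?_ ?_).2 hswap) <;> simp_all
  have hab_lt : (T ++ a :: b :: t).idxOf a < (T ++ a :: b :: t).idxOf b :=
    (idxOf_lt_idxOf_iff_pair_sublist hN (by simp)).2
      ((((List.nil_sublist t).cons_cons b).cons_cons a).trans (List.sublist_append_right T _))
  rcases ha with rfl | rfl <;> rcases hb with hxb | hyb
  · exact absurd hxb hab
  · exact absurd (hyb ▸ hab_lt) hnot
  · exact ⟨hxb, rfl⟩
  · exact absurd hyb hab

theorem card_le_card_add_ite_of_forall {s t : Finset α} {a : α} {p : Prop} [Decidable p]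
    (h : ∀ y ∈ s, y ∈ t ∨ (y = a ∧ p)) : s.card ≤ t.card + if p then 1 else 0 := by
  split_ifs with hp
  · refine (Finset.card_le_card fun y hy => ?_).trans (Finset.card_insert_le a t)
    rcases h y hy with h | ⟨rfl, -⟩ <;> simp [h]
  · exact Finset.card_le_card fun y hy => (h y hy).resolve_right fun h' => hp h'.2

def inversions (L M N : List α) (x : α) : Finset α :=
  L.toFinset.filter fun y => M.idxOf y < M.idxOf x ∧ N.idxOf x < N.idxOf y

def potential (L : List α) (w : α → ℕ) (M N : List α) : ℕ :=
  ∑ x ∈ L.toFinset, w x * (inversions L M N x).card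

section Potential

variable {L M N : List α} {w : α → ℕ}

theorem potential_self (L : List α) (w : α → ℕ) (M : List α) : potential L w M M = 0 :=
  Finset.sum_eq_zero fun x _ => by
    rw [inversions, Finset.filter_eq_empty_iff.2 fun y _ h => lt_asymm h.1 h.2, Finset.card_empty,
      mul_zero]

theorem potential_le_add_of_reverses {N' : List α} {a b : α}
    (h : ∀ x ∈ L, ∀ y ∈ L, N'.idxOf x < N'.idxOf y → ¬ N.idxOf x < N.idxOf y → x = b ∧ y = a) :
    potential L w M N' ≤ potential L w M N + w b := by
  have hx : ∀ x ∈ L.toFinset, w x * (inversions L M N' x).card ≤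
      w x * (inversions L M N x).card + if x = b then w b else 0 := by
    intro x hx
    have hcard := card_le_card_add_ite_of_forall (s := inversions L M N' x)
      (t := inversions L M N x) (a := a) (p := x = b) fun y hy => by
        simp only [inversions, Finset.mem_filter, List.mem_toFinset] at hy ⊢
        by_cases hN : N.idxOf x < N.idxOf y
        · exact .inl ⟨hy.1, hy.2.1, hN⟩
        · exact .inr (h x (List.mem_toFinset.1 hx) y hy.1 hy.2.2 hN).symm
    calc w x * (inversions L M N' x).card
        ≤ w x * ((inversions L M N x).card + if x = b then 1 else 0) := Nat.mul_le_mul_left _ hcard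
      _ = w x * (inversions L M N x).card + if x = b then w b else 0 := by
        split_ifs with hxb <;> simp [hxb, mul_add]
  calc potential L w M N'
      ≤ ∑ x ∈ L.toFinset, (w x * (inversions L M N x).card + if x = b then w b else 0) :=
        Finset.sum_le_sum hx
    _ ≤ potential L w M N + w b := by
        rw [Finset.sum_add_distrib, Finset.sum_ite_eq']
        split_ifs <;> simp [potential]

theorem potential_adjSwap_le (hL : L.Nodup) (hN : N.Perm L) (hw : ∀ x, w x ≤ 2) (i : ℕ) :
    potential L w M (adjSwap N i) ≤ potential L w M N + 2 := by
  rcases adjSwap_eq_self_or_swap N i with h | ⟨T, a, b, t, rfl, h⟩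
  · rw [h]; omega
  · have hrev := potential_le_add_of_reverses (M := M) (w := w) (N := T ++ a :: b :: t)
      (N' := adjSwap _ i) (a := a) (b := b) fun x hx y hy hswap hnot => by
        rw [← hN.mem_iff] at hx hy
        exact eq_and_eq_of_swap_reverses (hN.nodup_iff.2 hL) hx hy (h ▸ hswap) hnot
    have := hw b
    omega

theorem potential_doPaid_le (hL : L.Nodup) (hN : N.Perm L) (hw : ∀ x, w x ≤ 2) (ps : List ℕ) :
    potential L w M (doPaid N ps) ≤ potential L w M N + 2 * ps.length := by
  induction ps generalizing N with
  | nil => exact le_of_eq (by simp [doPaid])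
  | cons p ps ih =>
    have := ih ((adjSwap_perm N p).trans hN)
    have := potential_adjSwap_le (M := M) hL hN hw p
    simp only [doPaid, List.foldl_cons, List.length_cons] at *
    omega

theorem idxOf_le_card_inversions_add (hL : L.Nodup) (hM : M.Perm L) (hN : N.Perm L) {r : α}
    (hr : r ∈ L) : M.idxOf r ≤ (inversions L M N r).card + N.idxOf r := by
  have hcard (K : List α) (hK : K.Perm L) :
      (L.toFinset.filter fun y => K.idxOf y < K.idxOf r).card = K.idxOf r :=
    card_filter_idxOf_lt_of_le hL hK
      (hK.length_eq ▸ (List.idxOf_lt_length_of_mem (hK.mem_iff.2 hr)).le)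
  rw [← hcard M hM, ← hcard N hN]
  refine (Finset.card_le_card fun y hy => ?_).trans (Finset.card_union_le _ _)
  simp only [Finset.mem_filter, Finset.mem_union, inversions, List.mem_toFinset] at hy ⊢
  by_cases hNy : N.idxOf r < N.idxOf y
  · exact .inl ⟨hy.1, hy.2, hNy⟩
  · refine .inr ⟨hy.1, lt_of_le_of_ne (not_lt.1 hNy) fun e => ?_⟩
    rw [(List.idxOf_inj (hN.mem_iff.2 hy.1)).1 e] at hy
    exact lt_irrefl _ hy.2

end Potential

section Access

variable {L M N : List α} {w w' : α → ℕ} {r : α}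

theorem inversions_cons_erase_self (L M N : List α) (r : α) :
    inversions L (r :: M.erase r) N r = ∅ :=
  Finset.filter_eq_empty_iff.2 fun y _ h => by simp at h

theorem card_inversions_cons_erase_freeMove_le (hL : L.Nodup) (hM : M.Perm L) (hN : N.Perm L)
    (hr : r ∈ L) (j : ℕ) {x : α} (hx : x ∈ L) (hxr : x ≠ r) :
    (inversions L (r :: M.erase r) (freeMove N r j) x).card ≤
      (inversions L M N x).card + if N.idxOf x < min j (N.idxOf r) then 1 else 0 := by
  have hNd := hN.nodup_iff.2 hL
  have hrN := hN.mem_iff.2 hr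
  refine card_le_card_add_ite_of_forall (a := r) fun y hy => ?_
  simp only [inversions, Finset.mem_filter, List.mem_toFinset] at hy ⊢
  by_cases hyr : y = r
  · rw [hyr] at hy
    exact .inr ⟨hyr, (idxOf_lt_idxOf_freeMove_self_iff hNd hrN j (hN.mem_iff.2 hx)).1 hy.2.2⟩
  · exact .inl ⟨hy.1,
      (idxOf_lt_idxOf_cons_erase_iff (hM.nodup_iff.2 hL) (hM.mem_iff.2 hy.1)
        (hM.mem_iff.2 hx) hyr hxr).1 hy.2.1,
      (idxOf_lt_idxOf_freeMove_iff hNd hrN j (hN.mem_iff.2 hx) (hN.mem_iff.2 hy.1)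
        hxr hyr).1 hy.2.2⟩

theorem potential_cons_erase_freeMove_le (hL : L.Nodup) (hM : M.Perm L) (hN : N.Perm L)
    (hr : r ∈ L) (j : ℕ) (hw : ∀ x, w x ≤ 2) (hw' : ∀ x ≠ r, w' x = w x) :
    potential L w' (r :: M.erase r) (freeMove N r j) + w r * (inversions L M N r).card ≤
      potential L w M N + 2 * min j (N.idxOf r) := by
  have hx : ∀ x ∈ L.toFinset,
      w' x * (inversions L (r :: M.erase r) (freeMove N r j) x).card +
          (if x = r then w r * (inversions L M N r).card else 0) ≤
        w x * (inversions L M N x).card + 2 * if N.idxOf x < min j (N.idxOf r) then 1 else 0 := by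
    intro x hx
    rw [List.mem_toFinset] at hx
    by_cases hxr : x = r
    · simp [hxr, inversions_cons_erase_self]
    rw [hw' x hxr, if_neg hxr, add_zero]
    calc w x * (inversions L (r :: M.erase r) (freeMove N r j) x).card
        ≤ w x * ((inversions L M N x).card + if N.idxOf x < min j (N.idxOf r) then 1 else 0) :=
          Nat.mul_le_mul_left _ (card_inversions_cons_erase_freeMove_le hL hM hN hr j hx hxr)
      _ ≤ _ := by rw [mul_add]; exact Nat.add_le_add_left (Nat.mul_le_mul_right _ (hw x)) _
  have hmin : min j (N.idxOf r) ≤ L.length :=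
    (min_le_right _ _).trans ((hN.length_eq ▸ List.idxOf_lt_length_of_mem (hN.mem_iff.2 hr)).le)
  have hsum := Finset.sum_le_sum hx
  rw [Finset.sum_add_distrib, Finset.sum_add_distrib, Finset.sum_ite_eq',
    if_pos (List.mem_toFinset.2 hr), ← Finset.mul_sum, Finset.sum_boole,
    card_filter_idxOf_lt_of_le hL hN hmin] at hsum
  simpa [potential] using hsum

theorem inversions_freeMove_subset (hL : L.Nodup) (hN : N.Perm L) (hr : r ∈ L) (j : ℕ) {x : α}
    (hx : x ∈ L) (hxr : x ≠ r) : inversions L M (freeMove N r j) x ⊆ inversions L M N x := by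
  have hNd := hN.nodup_iff.2 hL
  have hrN := hN.mem_iff.2 hr
  intro y hy
  simp only [inversions, Finset.mem_filter, List.mem_toFinset] at hy ⊢
  refine ⟨hy.1, hy.2.1, ?_⟩
  by_cases hyr : y = r
  · rw [hyr] at hy ⊢
    exact ((idxOf_lt_idxOf_freeMove_self_iff hNd hrN j (hN.mem_iff.2 hx)).1 hy.2.2).trans_le
      (min_le_right _ _)
  · exact (idxOf_lt_idxOf_freeMove_iff hNd hrN j (hN.mem_iff.2 hx) (hN.mem_iff.2 hy.1)
      hxr hyr).1 hy.2.2

theorem card_inversions_freeMove_self_le (hL : L.Nodup) (hN : N.Perm L) (hr : r ∈ L) (j : ℕ) :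
    (inversions L M (freeMove N r j) r).card ≤
      (inversions L M N r).card + (N.idxOf r - min j (N.idxOf r)) := by
  have hNd := hN.nodup_iff.2 hL
  have hrN := hN.mem_iff.2 hr
  have hi : N.idxOf r ≤ L.length := hN.length_eq ▸ (List.idxOf_lt_length_of_mem hrN).le
  have hmono : (L.toFinset.filter fun y => N.idxOf y < min j (N.idxOf r)) ⊆
      L.toFinset.filter fun y => N.idxOf y < N.idxOf r :=
    Finset.monotone_filter_right _ fun y _ h => h.trans_le (min_le_right _ _)
  have hsdiff : ((L.toFinset.filter fun y => N.idxOf y < N.idxOf r) \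
      L.toFinset.filter fun y => N.idxOf y < min j (N.idxOf r)).card =
        N.idxOf r - min j (N.idxOf r) := by
    rw [Finset.card_sdiff_of_subset hmono, card_filter_idxOf_lt_of_le hL hN hi,
      card_filter_idxOf_lt_of_le hL hN ((min_le_right _ _).trans hi)]
  rw [← hsdiff]
  refine (Finset.card_le_card fun y hy => ?_).trans (Finset.card_union_le _ _)
  simp only [inversions, Finset.mem_filter, Finset.mem_union, Finset.mem_sdiff,
    List.mem_toFinset] at hy ⊢
  have hyr : y ≠ r := by rintro rfl; exact lt_irrefl _ hy.2.1
  have hyN := hN.mem_iff.2 hy.1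
  by_cases hNy : N.idxOf r < N.idxOf y
  · exact .inl ⟨hy.1, hy.2.1, hNy⟩
  refine .inr ⟨⟨hy.1, lt_of_le_of_ne (not_lt.1 hNy) fun e => hyr ((List.idxOf_inj hyN).1 e)⟩,
    fun h => lt_asymm ((idxOf_lt_idxOf_freeMove_self_iff hNd hrN j hyN).2 h.2) hy.2.2⟩

theorem potential_freeMove_le (hL : L.Nodup) (hN : N.Perm L) (hr : r ∈ L)
    (j : ℕ) (hw' : ∀ x ≠ r, w' x = w x) :
    potential L w' M (freeMove N r j) + w r * (inversions L M N r).card ≤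
      potential L w M N +
        w' r * ((inversions L M N r).card + (N.idxOf r - min j (N.idxOf r))) := by
  have hoff : ∀ x ∈ L.toFinset.erase r,
      w' x * (inversions L M (freeMove N r j) x).card ≤ w x * (inversions L M N x).card := by
    intro x hx
    obtain ⟨hxr, hxL⟩ := Finset.mem_erase.1 hx
    exact hw' x hxr ▸ Nat.mul_le_mul_left _ (Finset.card_le_card
      (inversions_freeMove_subset hL hN hr j (List.mem_toFinset.1 hxL) hxr))
  have := Finset.sum_le_sum hoff
  have := Nat.mul_le_mul_left (w' r) (card_inversions_freeMove_self_le (M := M) hL hN hr j)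
  simp only [potential, ← Finset.add_sum_erase _ _ (List.mem_toFinset.2 hr)]
  omega

end Access

end

def mtf2Weight (b : α → Bool) (x : α) : ℕ := if b x then 1 else 2

theorem mtf2Weight_le_two (b : α → Bool) (x : α) : mtf2Weight b x ≤ 2 := by
  unfold mtf2Weight; split <;> omega

variable [DecidableEq α]

theorem mtf2Weight_update_of_ne (b : α → Bool) {r x : α} (v : Bool) (hx : x ≠ r) :
    mtf2Weight (Function.update b r v) x = mtf2Weight b x := by
  simp [mtf2Weight, Function.update_of_ne hx]

section Amortized

variable {L M₁ M₂ N : List α} {r : α}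

theorem mtf2_amortized_access (hL : L.Nodup) {b₁ b₂ : α → Bool} (hb : ∀ x, b₂ x = !b₁ x)
    (hM₁ : M₁.Perm L) (hM₂ : M₂.Perm L) (hN : N.Perm L) (hr : r ∈ L) (j : ℕ) :
    (M₁.idxOf r + 1) + (M₂.idxOf r + 1) +
        potential L (mtf2Weight (Function.update b₁ r (!b₁ r)))
          (if !b₁ r then M₁ else r :: M₁.erase r) (freeMove N r j) +
        potential L (mtf2Weight (Function.update b₂ r (!b₂ r)))
          (if !b₂ r then M₂ else r :: M₂.erase r) (freeMove N r j) ≤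
      potential L (mtf2Weight b₁) M₁ N + potential L (mtf2Weight b₂) M₂ N +
        4 * (N.idxOf r + 1) := by
  wlog h₁ : b₁ r = true generalizing b₁ b₂ M₁ M₂
  · have := this (b₁ := b₂) (b₂ := b₁) (fun x => by simp [hb]) hM₂ hM₁ (by simpa [hb] using h₁)
    omega
  have h₂ : b₂ r = false := by simp [hb, h₁]
  have hcost₁ := idxOf_le_card_inversions_add hL hM₁ hN hr
  have hcost₂ := idxOf_le_card_inversions_add hL hM₂ hN hr
  have hpot₁ := potential_cons_erase_freeMove_le hL hM₁ hN hr j (mtf2Weight_le_two b₁)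
    (w' := mtf2Weight (Function.update b₁ r false)) fun x hx => mtf2Weight_update_of_ne _ _ hx
  have hpot₂ := potential_freeMove_le (M := M₂) hL hN hr j
    (w' := mtf2Weight (Function.update b₂ r true)) fun x hx => mtf2Weight_update_of_ne _ _ hx
  have hmin : min j (N.idxOf r) ≤ N.idxOf r := min_le_right _ _
  have hw₁ : mtf2Weight b₁ r = 1 := by simp [mtf2Weight, h₁]
  have hw₂ : mtf2Weight b₂ r = 2 := by simp [mtf2Weight, h₂]
  have hw₂' : mtf2Weight (Function.update b₂ r true) r = 1 := by simp [mtf2Weight]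
  rw [hw₁, one_mul] at hpot₁
  rw [hw₂, hw₂', one_mul] at hpot₂
  simp only [h₁, h₂, Bool.not_true, Bool.not_false, Bool.false_eq_true, if_true, if_false]
  omega

theorem mtf2Cost_add_mtf2Cost_le (hL : L.Nodup) (σ : List α) (hσ : ∀ r ∈ σ, r ∈ L)
    (as : List (Action α)) (hlen : as.length = σ.length) {b₁ b₂ : α → Bool}
    (hb : ∀ x, b₂ x = !b₁ x) (hM₁ : M₁.Perm L) (hM₂ : M₂.Perm L) (hN : N.Perm L) :
    mtf2Cost 1 b₁ M₁ σ + mtf2Cost 1 b₂ M₂ σ ≤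
      4 * serveCost 1 N σ as + potential L (mtf2Weight b₁) M₁ N +
        potential L (mtf2Weight b₂) M₂ N := by
  induction σ generalizing as b₁ b₂ M₁ M₂ N with
  | nil => simp [mtf2Cost]
  | cons r σ ih =>
    obtain _ | ⟨a, as⟩ := as
    · simp at hlen
    have hr := hσ r List.mem_cons_self
    have hN₀ : (doPaid N a.paid).Perm L := (doPaid_perm N a.paid).trans hN
    have hnext (b : α → Bool) {M : List α} (hM : M.Perm L) :
        (if !b r then M else r :: M.erase r).Perm L := by
      split
      · exact hM
      · exact (List.perm_cons_erase (hM.mem_iff.2 hr)).symm.trans hM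
    have hIH := ih (fun x hx => hσ x (List.mem_cons_of_mem r hx)) as (by simpa using hlen)
      (b₁ := Function.update b₁ r (!b₁ r)) (b₂ := Function.update b₂ r (!b₂ r))
      (fun x => by by_cases hx : x = r <;> simp [hx, hb])
      (hnext b₁ hM₁) (hnext b₂ hM₂)
      ((freeMove_perm (hN₀.mem_iff.2 hr) a.target).trans hN₀)
    have hacc := mtf2_amortized_access hL hb hM₁ hM₂ hN₀ hr a.target
    have hpaid₁ := potential_doPaid_le (M := M₁) hL hN (mtf2Weight_le_two b₁) a.paid
    have hpaid₂ := potential_doPaid_le (M := M₂) hL hN (mtf2Weight_le_two b₂) a.paid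
    simp only [mtf2Cost, serveCost, stepCost, stepList] at hIH ⊢
    omega

end Amortized

theorem exists_serveCost_eq_optCost (c : ℕ) (L σ : List α) :
    ∃ as : List (Action α), as.length = σ.length ∧ serveCost c L σ as = optCost c L σ := by
  have hne : {n | ∃ as : List (Action α), as.length = σ.length ∧ serveCost c L σ as = n}.Nonempty :=
    ⟨_, σ.map fun _ => ⟨[], 0⟩, by simp, rfl⟩
  exact Nat.sInf_mem hne

end ListUpdate

open ListUpdate

/-- For every initial list and every request sequence, under the full cost model,
`MTFO(σ) + MTFE(σ) ≤ 4·OPT(σ)`. -/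
theorem mtfo_add_mtfe_le_four_opt {α : Type} [DecidableEq α]
    (L : List α) (hL : L.Nodup) (σ : List α) (hσ : ∀ r ∈ σ, r ∈ L) :
    mtfoCost 1 L σ + mtfeCost 1 L σ ≤ 4 * optCost 1 L σ := by
  obtain ⟨as, hlen, hopt⟩ := exists_serveCost_eq_optCost 1 L σ
  have := mtf2Cost_add_mtf2Cost_le hL σ hσ as hlen (b₁ := fun _ => true) (b₂ := fun _ => false)
    (fun _ => rfl) (List.Perm.refl L) (List.Perm.refl L) (List.Perm.refl L)
  rwa [potential_self, potential_self, hopt] at this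
end
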